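/- arXiv:math/0608780 — 3 statements merged into one kernel-verified Lean document; each statement's English description precedes it below -/
import Mathlib

section
/- Local well-posedness in C_b: Assume additionally that U_k := sup_{z∈ℂ}|∇^kU(z)| < ∞ for k = 0,1,2, with U₂ > 0, and set τ = 1/(4U₂²). Then for every φ ∈ H¹(ℝ) there exists a unique ψ ∈ C_b(ℝ×[0,τ];ℂ) satisfying the Duhamel equation ψ(x,t) = W_tφ(x) − ∫_0^t (2πs)^{−1/2} e^{ix²/(2s)} F(ψ(0,t−s)) ds for all x ∈ ℝ and t ∈ [0,τ]. -/
/-!  Common framework for the Schrödinger equation coupled to a nonlinear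
oscillator (point nonlinearity), following Komech–Komech.

The Sobolev space `H¹(ℝ)` is described through the Fourier side: an element
of `H¹(ℝ)` is (identified with) a measurable function `hat : ℝ → ℂ`
(its Fourier transform, nonunitary convention `φ̂(k) = ∫ e^{-ikx} φ(x) dx`)
such that `(1+k²)^{1/2} φ̂ ∈ L²(ℝ)`.  Since `φ̂ ∈ L¹`, the continuous
representative `φ(x) = (2π)⁻¹ ∫ e^{ikx} φ̂(k) dk` is defined pointwise, so
`φ(0)` makes sense.  Plancherel gives `‖φ‖²_{L²} = (2π)⁻¹∫|φ̂|²` and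
`‖φ'‖²_{L²} = (2π)⁻¹∫ k²|φ̂|²`. -/

noncomputable section

open MeasureTheory Real Set

namespace SNLS

/-- The Sobolev space `H¹(ℝ)`, described via the Fourier transform. -/
structure H1 : Type where
  hat : ℝ → ℂ
  meas : AEStronglyMeasurable hat (volume : Measure ℝ)
  finite : Integrable (fun k : ℝ => (1 + k ^ 2) * ‖hat k‖ ^ 2) volume

namespace H1

/-- The continuous (pointwise defined) representative of `φ ∈ H¹(ℝ)`:
the inverse Fourier transform, which converges absolutely. -/
def toFun (φ : H1) : ℝ → ℂ := fun x =>
  (2 * π)⁻¹ * ∫ k : ℝ, Complex.exp (Complex.I * ((k * x : ℝ) : ℂ)) * φ.hat k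

/-- `‖φ‖²_{L²} = ∫_ℝ |φ(x)|² dx`, computed on the Fourier side (Plancherel). -/
def l2NormSq (φ : H1) : ℝ := (2 * π)⁻¹ * ∫ k : ℝ, ‖φ.hat k‖ ^ 2

/-- `‖φ'‖²_{L²} = ∫_ℝ |φ'(x)|² dx`, computed on the Fourier side. -/
def derivL2NormSq (φ : H1) : ℝ := (2 * π)⁻¹ * ∫ k : ℝ, k ^ 2 * ‖φ.hat k‖ ^ 2

/-- `‖φ‖²_{H¹} = ‖φ‖²_{L²} + ‖φ'‖²_{L²}`. -/
def normSq (φ : H1) : ℝ := (2 * π)⁻¹ * ∫ k : ℝ, (1 + k ^ 2) * ‖φ.hat k‖ ^ 2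

/-- The `H¹` norm. -/
def norm (φ : H1) : ℝ := Real.sqrt φ.normSq

/-- The `H¹` distance. -/
def dist (φ ψ : H1) : ℝ :=
  Real.sqrt ((2 * π)⁻¹ * ∫ k : ℝ, (1 + k ^ 2) * ‖φ.hat k - ψ.hat k‖ ^ 2)

/-- The `H¹` inner product `⟨f,g⟩_{H¹} = ⟨f,g⟩_{L²} + ⟨f',g'⟩_{L²}`,
computed on the Fourier side. -/
def inner (φ ψ : H1) : ℂ :=
  (2 * π)⁻¹ * ∫ k : ℝ, ((1 + k ^ 2 : ℝ) : ℂ) * (starRingEnd ℂ (φ.hat k) * ψ.hat k)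

/-- Continuity of a curve in `H¹` on a set of times, w.r.t. the `H¹` distance. -/
def ContOn (Ψ : ℝ → H1) (S : Set ℝ) : Prop :=
  ∀ t₀ ∈ S, ∀ δ > 0, ∃ η > 0, ∀ t ∈ S, |t - t₀| < η → dist (Ψ t) (Ψ t₀) < δ

end H1

/-- The free Schrödinger group `W_t`, defined by `(W_tφ)^(k) = e^{ik²t} φ̂(k)`;
equivalently `(W_tφ)(x) = (2π)⁻¹ ∫ e^{ikx} e^{ik²t} φ̂(k) dk`. -/
def W (t : ℝ) (φ : H1) : ℝ → ℂ := fun x =>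
  (2 * π)⁻¹ * ∫ k : ℝ, Complex.exp (Complex.I * ((k * x + k ^ 2 * t : ℝ) : ℂ)) * φ.hat k

/-- The charge `Q(φ) = ½ ∫_ℝ |φ|² dx`. -/
def charge (φ : H1) : ℝ := (1 / 2) * φ.l2NormSq

/-- The energy `𝓗(φ) = ½ ∫_ℝ |φ'|² dx + U(φ(0))`. -/
def energy (U : ℂ → ℝ) (φ : H1) : ℝ := (1 / 2) * φ.derivL2NormSq + U (φ.toFun 0)

/-- The gradient `∇_ψ U` of `U : ℂ → ℝ` with respect to `(Re ψ, Im ψ)`,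
viewed as a complex number. -/
def grad (U : ℂ → ℝ) (z : ℂ) : ℂ :=
  ((fderiv ℝ U z 1 : ℝ) : ℂ) + ((fderiv ℝ U z Complex.I : ℝ) : ℂ) * Complex.I

/-- The nonlinearity `F(ψ) = -∇_ψ U(ψ)`. -/
def nonlin (U : ℂ → ℝ) (z : ℂ) : ℂ := -grad U z

/-- The kernel `(2πs)^{-1/2} e^{ix²/(2s)}` of the free propagator applied to
`δ(x)` (principal branch of the square root for negative times). -/
def freeKernel (s x : ℝ) : ℂ :=
  ((2 * π * s : ℝ) : ℂ) ^ (-(1 / 2 : ℂ)) *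
    Complex.exp (Complex.I * ((x ^ 2 : ℝ) : ℂ) / ((2 * s : ℝ) : ℂ))

/-- `ψ` solves, for all times in `S`, the Duhamel equation
`ψ(x,t) = W_tφ(x) − ∫_0^t (2πs)^{−1/2} e^{ix²/(2s)} F(ψ(0,t−s)) ds`
for the Schrödinger equation with point nonlinearity `F` and data `φ`. -/
def IsDuhamelSolution (F : ℂ → ℂ) (φ : H1) (ψ : ℝ → ℝ → ℂ) (S : Set ℝ) : Prop :=
  ∀ x : ℝ, ∀ t ∈ S,
    ψ x t = W t φ x - ∫ s in (0 : ℝ)..t, freeKernel s x * F (ψ 0 (t - s))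

/-- `ψ ∈ C_b(ℝ × S; ℂ)`: bounded and continuous on `ℝ × S`. -/
def CbOn (ψ : ℝ → ℝ → ℂ) (S : Set ℝ) : Prop :=
  ContinuousOn (fun p : ℝ × ℝ => ψ p.1 p.2) (Set.univ ×ˢ S) ∧
    ∃ M : ℝ, ∀ x : ℝ, ∀ t ∈ S, ‖ψ x t‖ ≤ M

/-- `t ↦ ψ(·,t)` takes values in `H¹(ℝ)` and is `H¹`-continuous on `S`. -/
def ContH1On (ψ : ℝ → ℝ → ℂ) (S : Set ℝ) : Prop :=
  ∃ Ψ : ℝ → H1, (∀ t ∈ S, ∀ x : ℝ, (Ψ t).toFun x = ψ x t) ∧ H1.ContOn Ψ S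

/-- A mollifying profile: `ρ₁ ∈ C₀^∞`, nonnegative, supported in `[-1,1]`,
of total integral `1`. -/
structure Mollifier : Type where
  ρ : ℝ → ℝ
  smooth : ContDiff ℝ (⊤ : ℕ∞) ρ
  supp : ∀ x : ℝ, x ∉ Set.Icc (-1 : ℝ) 1 → ρ x = 0
  nonneg : ∀ x : ℝ, 0 ≤ ρ x
  total : (∫ x : ℝ, ρ x) = 1

/-- `ρ_ε(x) = ε⁻¹ ρ₁(x/ε)`. -/
def rho (m : Mollifier) (ε : ℝ) : ℝ → ℝ := fun x => ε⁻¹ * m.ρ (x / ε)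

/-- The pairing `⟨g, ψ⟩ = ∫_ℝ g(x) ψ(x) dx`. -/
def pair (g : ℝ → ℝ) (ψ : ℝ → ℂ) : ℂ := ∫ x : ℝ, (g x : ℂ) * ψ x

/-- The `H¹` norm of an ordinary (smooth) function. -/
def h1NormFun (g : ℝ → ℝ) : ℝ :=
  Real.sqrt ((∫ x : ℝ, g x ^ 2) + ∫ x : ℝ, deriv g x ^ 2)

/-- The Fourier transform `ĝ(k) = ∫ e^{-ikx} g(x) dx` of a real function. -/
def fourierHatR (g : ℝ → ℝ) : ℝ → ℂ := fun k =>
  ∫ x : ℝ, Complex.exp (-(Complex.I * ((k * x : ℝ) : ℂ))) * (g x : ℂ)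

/-- The curve `Ψ : ℝ → H¹` solves, for times in `S`, the regularized Duhamel
equation `ψ_ε(t) = W_tφ − ∫_0^t W_s[ρ_ε · F(⟨ρ_ε, ψ_ε(t−s)⟩)] ds`
(with `g = ρ_ε`), written on the Fourier side, where it reads
`ψ̂_ε(t)(k) = e^{ik²t}φ̂(k) − ∫_0^t e^{ik²s} ĝ(k) F(⟨g, ψ_ε(t−s)⟩) ds`. -/
def IsRegularizedSolution (F : ℂ → ℂ) (g : ℝ → ℝ) (φ : H1) (Ψ : ℝ → H1)
    (S : Set ℝ) : Prop :=
  ∀ t ∈ S, ∀ k : ℝ,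
    (Ψ t).hat k =
      Complex.exp (Complex.I * ((k ^ 2 * t : ℝ) : ℂ)) * φ.hat k -
        ∫ s in (0 : ℝ)..t,
          Complex.exp (Complex.I * ((k ^ 2 * s : ℝ) : ℂ)) * fourierHatR g k *
            F (pair g (Ψ (t - s)).toFun)

/-- The regularized energy `𝓗_ε(ψ) = ½‖ψ'‖²_{L²} + U(⟨ρ_ε, ψ⟩)` (with `g = ρ_ε`). -/
def energyReg (U : ℂ → ℝ) (g : ℝ → ℝ) (φ : H1) : ℝ :=
  (1 / 2) * φ.derivL2NormSq + U (pair g φ.toFun)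

end SNLS
namespace SNLS

section Helpers

lemma freeKernel_eq {s : ℝ} (hs : 0 ≤ s) (x : ℝ) :
    freeKernel s x = (((2 * π * s) ^ (-(1/2) : ℝ) : ℝ) : ℂ) *
      Complex.exp (Complex.I * ((x ^ 2 / (2 * s) : ℝ) : ℂ)) := by
  unfold freeKernel
  have h2πs : (0:ℝ) ≤ 2 * π * s := by positivity
  rw [Complex.ofReal_cpow h2πs]
  congr 1
  · congr 1
    push_cast
    ring
  · congr 1
    push_cast
    ring

lemma norm_freeKernel {s : ℝ} (hs : 0 ≤ s) (x : ℝ) :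
    ‖freeKernel s x‖ = (2 * π * s) ^ (-(1/2) : ℝ) := by
  rw [freeKernel_eq hs x, norm_mul, Complex.norm_real,
    Complex.norm_exp]
  have : (Complex.I * ((x ^ 2 / (2 * s) : ℝ) : ℂ)).re = 0 := by
    rw [Complex.mul_re, Complex.I_re, Complex.I_im, Complex.ofReal_re, Complex.ofReal_im]
    ring
  rw [this, Real.exp_zero, mul_one, Real.norm_eq_abs, abs_of_nonneg (by positivity)]

lemma freeKernel_contOn (x : ℝ) : ContinuousOn (fun s => freeKernel s x) (Set.Ioi 0) := by
  have : ContinuousOn (fun s : ℝ => (((2 * π * s) ^ (-(1/2) : ℝ) : ℝ) : ℂ) *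
      Complex.exp (Complex.I * ((x ^ 2 / (2 * s) : ℝ) : ℂ))) (Set.Ioi 0) := by
    intro s hs
    have hs' : (0:ℝ) < s := hs
    apply ContinuousAt.continuousWithinAt
    apply ContinuousAt.mul
    · apply Complex.continuous_ofReal.continuousAt.comp
      exact (Real.continuousAt_rpow_const _ _ (Or.inl (by positivity))).comp
        (by fun_prop)
    · apply Complex.continuous_exp.continuousAt.comp
      apply ContinuousAt.mul continuousAt_const
      apply Complex.continuous_ofReal.continuousAt.comp
      exact (continuousAt_const.div (by fun_prop) (by positivity))
  exact this.congr fun s hs => freeKernel_eq (le_of_lt hs) x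

lemma freeKernel_contX {s : ℝ} (hs : 0 < s) : Continuous (fun x => freeKernel s x) := by
  have : Continuous (fun x : ℝ => (((2 * π * s) ^ (-(1/2) : ℝ) : ℝ) : ℂ) *
      Complex.exp (Complex.I * ((x ^ 2 / (2 * s) : ℝ) : ℂ))) := by fun_prop
  exact this.congr fun x => (freeKernel_eq hs.le x).symm

lemma integrableOn_kernelBound (T : ℝ) :
    IntegrableOn (fun s => (2 * π * s) ^ (-(1/2) : ℝ)) (Set.Ioc 0 T) := by
  rcases le_or_gt T 0 with hT | hT
  · rw [Set.Ioc_eq_empty (by exact fun h => absurd (h.trans_le hT) (lt_irrefl 0))]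
    simp [IntegrableOn]
  · have h1 : IntegrableOn (fun s : ℝ => s ^ (-(1/2) : ℝ)) (Set.Ioc 0 T) := by
      have := intervalIntegral.intervalIntegrable_rpow' (a := 0) (b := T) (r := -(1/2)) (by norm_num)
      exact (intervalIntegrable_iff_integrableOn_Ioc_of_le hT.le).mp this
    have h2 : IntegrableOn (fun s : ℝ => (2*π) ^ (-(1/2) : ℝ) * s ^ (-(1/2) : ℝ))
        (Set.Ioc 0 T) := h1.const_mul _
    apply h2.congr_fun ?_ measurableSet_Ioc
    intro s hs
    simp only
    rw [← Real.mul_rpow (by positivity) hs.1.le, mul_assoc]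

lemma kernelBound_intervalIntegrable {t : ℝ} (ht : 0 ≤ t) :
    IntervalIntegrable (fun s => (2 * π * s) ^ (-(1/2) : ℝ)) volume 0 t :=
  (intervalIntegrable_iff_integrableOn_Ioc_of_le ht).mpr (integrableOn_kernelBound t)

lemma integral_kernelBound {t : ℝ} (ht : 0 ≤ t) :
    ∫ s in (0:ℝ)..t, (2 * π * s) ^ (-(1/2) : ℝ) = (2*π) ^ (-(1/2) : ℝ) * (2 * t ^ (1/2 : ℝ)) := by
  have heq : Set.EqOn (fun s : ℝ => (2 * π * s) ^ (-(1/2) : ℝ))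
      (fun s : ℝ => (2*π) ^ (-(1/2) : ℝ) * s ^ (-(1/2) : ℝ)) (Set.uIcc 0 t) := by
    intro s hs
    rw [Set.uIcc_of_le ht] at hs
    simp only
    rw [← Real.mul_rpow (by positivity) hs.1, mul_assoc]
  rw [intervalIntegral.integral_congr heq, intervalIntegral.integral_const_mul]
  have : ∫ s in (0:ℝ)..t, s ^ (-(1/2) : ℝ) = 2 * t ^ (1/2 : ℝ) := by
    rw [integral_rpow (Or.inl (by norm_num))]
    rw [Real.zero_rpow (by norm_num)]
    norm_num
    ring
  rw [this]


lemma norm_exp_I_mul_ofReal (r : ℝ) : ‖Complex.exp (Complex.I * (r:ℂ))‖ = 1 := by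
  rw [Complex.norm_exp, Complex.mul_re, Complex.I_re, Complex.I_im,
    Complex.ofReal_re, Complex.ofReal_im]
  norm_num

lemma integrable_hat (φ : H1) : Integrable φ.hat := by
  have hb : Integrable (fun k : ℝ => ((1 + k^2)⁻¹ + (1 + k^2) * ‖φ.hat k‖^2)/2) :=
    (integrable_inv_one_add_sq.add φ.finite).div_const 2
  apply hb.mono' φ.meas
  filter_upwards with k
  have ha : (0:ℝ) < Real.sqrt (1 + k^2) := Real.sqrt_pos.mpr (by positivity)
  have ha2 : Real.sqrt (1 + k^2) ^ 2 = 1 + k^2 := Real.sq_sqrt (by positivity)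
  have h1 : (Real.sqrt (1 + k^2))⁻¹ * Real.sqrt (1 + k^2) = 1 := inv_mul_cancel₀ (ne_of_gt ha)
  have hinv : (1 + k^2)⁻¹ = ((Real.sqrt (1 + k^2))⁻¹)^2 := by
    rw [inv_pow, ha2]
  set a := Real.sqrt (1 + k^2)
  set b := ‖φ.hat k‖
  have hb0 : 0 ≤ b := norm_nonneg _
  have h2 : a⁻¹ * a * b = b := by rw [h1, one_mul]
  nlinarith [sq_nonneg (a⁻¹ - a*b), h2, hinv, ha2]

lemma W_cont (φ : H1) : Continuous (fun p : ℝ × ℝ => W p.2 φ p.1) := by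
  have key : Continuous (fun p : ℝ × ℝ =>
      ∫ k : ℝ, Complex.exp (Complex.I * ((k * p.1 + k^2*p.2 : ℝ):ℂ)) * φ.hat k) := by
    apply continuous_of_dominated (bound := fun k => ‖φ.hat k‖)
    · intro p
      exact (Continuous.aestronglyMeasurable (by fun_prop)).mul φ.meas
    · intro p
      filter_upwards with k
      rw [norm_mul, norm_exp_I_mul_ofReal, one_mul]
    · exact (integrable_hat φ).norm
    · filter_upwards with k
      fun_prop
  simp only [W]
  exact continuous_const.mul key

lemma W_bound (φ : H1) (t x : ℝ) : ‖W t φ x‖ ≤ (2*π)⁻¹ * ∫ k : ℝ, ‖φ.hat k‖ := by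
  unfold W
  rw [norm_mul]
  have h1 : ‖(((2*π)⁻¹ : ℝ) : ℂ)‖ = (2*π)⁻¹ := by
    rw [Complex.norm_real, Real.norm_eq_abs, abs_of_nonneg (by positivity)]
  rw [h1]
  apply mul_le_mul_of_nonneg_left ?_ (by positivity)
  calc ‖∫ k : ℝ, Complex.exp (Complex.I * ((k * x + k^2*t : ℝ):ℂ)) * φ.hat k‖
      ≤ ∫ k : ℝ, ‖Complex.exp (Complex.I * ((k * x + k^2*t : ℝ):ℂ)) * φ.hat k‖ :=
        norm_integral_le_integral_norm _
    _ = ∫ k : ℝ, ‖φ.hat k‖ := by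
        congr 1
        funext k
        rw [norm_mul, norm_exp_I_mul_ofReal, one_mul]

lemma integrand_contOn (f : ℝ → ℂ) {T : ℝ} (hf : ContinuousOn f (Set.Icc 0 T))
    {t : ℝ} (ht : t ∈ Set.Icc 0 T) (x : ℝ) :
    ContinuousOn (fun s => freeKernel s x * f (t - s)) (Set.Ioc 0 t) := by
  apply ContinuousOn.mul ((freeKernel_contOn x).mono Set.Ioc_subset_Ioi_self)
  apply hf.comp (by fun_prop : Continuous fun s : ℝ => t - s).continuousOn
  intro s hs
  simp only [Set.mem_Icc]
  obtain ⟨hs1, hs2⟩ := hs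
  obtain ⟨ht1, ht2⟩ := ht
  constructor <;> linarith

lemma duhamel_integrableOn (f : ℝ → ℂ) {T : ℝ} (hf : ContinuousOn f (Set.Icc 0 T))
    (C : ℝ) (hC : ∀ r ∈ Set.Icc 0 T, ‖f r‖ ≤ C)
    {t : ℝ} (ht : t ∈ Set.Icc 0 T) (x : ℝ) :
    IntegrableOn (fun s => freeKernel s x * f (t - s)) (Set.Ioc 0 t) := by
  apply Integrable.mono' ((integrableOn_kernelBound t).mul_const C)
  · exact (integrand_contOn f hf ht x).aestronglyMeasurable measurableSet_Ioc
  · rw [ae_restrict_iff' measurableSet_Ioc]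
    filter_upwards with s hs
    rw [norm_mul, norm_freeKernel hs.1.le]
    apply mul_le_mul_of_nonneg_left ?_
      (Real.rpow_nonneg (mul_nonneg (by positivity) hs.1.le) _)
    exact hC _ (Set.mem_Icc.mpr ⟨by linarith [hs.2], by linarith [hs.1, ht.2]⟩)

lemma duhamel_intervalIntegrable (f : ℝ → ℂ) {T : ℝ} (hf : ContinuousOn f (Set.Icc 0 T))
    (C : ℝ) (hC : ∀ r ∈ Set.Icc 0 T, ‖f r‖ ≤ C)
    {t : ℝ} (ht : t ∈ Set.Icc 0 T) (x : ℝ) :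
    IntervalIntegrable (fun s => freeKernel s x * f (t - s)) volume 0 t :=
  (intervalIntegrable_iff_integrableOn_Ioc_of_le ht.1).mpr (duhamel_integrableOn f hf C hC ht x)

lemma duhamel_norm_le (f : ℝ → ℂ) {T : ℝ} (hf : ContinuousOn f (Set.Icc 0 T))
    (C : ℝ) (hC : ∀ r ∈ Set.Icc 0 T, ‖f r‖ ≤ C)
    {t : ℝ} (ht : t ∈ Set.Icc 0 T) (x : ℝ) :
    ‖∫ s in (0:ℝ)..t, freeKernel s x * f (t - s)‖ ≤
      C * ((2*π) ^ (-(1/2) : ℝ) * (2 * t ^ (1/2 : ℝ))) := by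
  have hC0 : 0 ≤ C := le_trans (norm_nonneg _) (hC 0 ⟨le_refl 0, ht.1.trans ht.2⟩)
  have hb := intervalIntegral.norm_integral_le_of_norm_le
    (f := fun s => freeKernel s x * f (t - s)) (g := fun s => (2*π*s) ^ (-(1/2):ℝ) * C)
    (μ := volume) (a := 0) (b := t) ht.1 ?_ ?_
  · refine hb.trans ?_
    rw [intervalIntegral.integral_mul_const, integral_kernelBound ht.1]
    exact le_of_eq (mul_comm _ _)
  · filter_upwards with s hs
    rw [norm_mul, norm_freeKernel hs.1.le]
    apply mul_le_mul_of_nonneg_left ?_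
      (Real.rpow_nonneg (mul_nonneg (by positivity) hs.1.le) _)
    exact hC _ (Set.mem_Icc.mpr ⟨by linarith [hs.2], by linarith [hs.1, ht.2]⟩)
  · exact (kernelBound_intervalIntegrable ht.1).mul_const C

lemma duhamel_cont (f : ℝ → ℂ) (hf : Continuous f) (C : ℝ) (hC : ∀ r, ‖f r‖ ≤ C) :
    ContinuousOn (fun p : ℝ × ℝ => ∫ s in (0:ℝ)..p.2, freeKernel s p.1 * f (p.2 - s))
      (Set.univ ×ˢ Set.Ici 0) := by
  have hC0 : 0 ≤ C := le_trans (norm_nonneg _) (hC 0)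
  set G : ℝ × ℝ → ℂ := fun p =>
    ∫ s : ℝ, Set.indicator (Set.Ioc 0 p.2) (fun s => freeKernel s p.1 * f (p.2 - s)) s with hGdef
  have hGcont : Continuous G := by
    rw [continuous_iff_continuousAt]
    intro p₀
    apply continuousAt_of_dominated
      (bound := Set.indicator (Set.Ioc 0 (p₀.2+1)) (fun s => (2*π*s) ^ (-(1/2):ℝ) * C))
    · filter_upwards with p
      rw [aestronglyMeasurable_indicator_iff measurableSet_Ioc]
      apply ContinuousOn.aestronglyMeasurable ?_ measurableSet_Ioc
      apply ContinuousOn.mul ((freeKernel_contOn p.1).mono Set.Ioc_subset_Ioi_self)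
      exact (hf.comp (by fun_prop : Continuous fun s : ℝ => p.2 - s)).continuousOn
    · have hev : ∀ᶠ p : ℝ × ℝ in nhds p₀, p.2 < p₀.2 + 1 :=
        (isOpen_lt continuous_snd continuous_const).eventually_mem (by simp : p₀.2 < p₀.2 + 1)
      filter_upwards [hev] with p hp
      filter_upwards with s
      by_cases hs : s ∈ Set.Ioc 0 p.2
      · rw [Set.indicator_of_mem hs,
          Set.indicator_of_mem (Set.mem_Ioc.mpr ⟨hs.1, hs.2.trans hp.le⟩)]
        rw [norm_mul, norm_freeKernel hs.1.le]
        exact mul_le_mul_of_nonneg_left (hC _)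
          (Real.rpow_nonneg (mul_nonneg (by positivity) hs.1.le) _)
      · rw [Set.indicator_of_notMem hs, norm_zero]
        apply Set.indicator_nonneg
        intro s' hs'
        exact mul_nonneg (Real.rpow_nonneg (mul_nonneg (by positivity) hs'.1.le) _) hC0
    · exact MeasureTheory.IntegrableOn.integrable_indicator
        ((integrableOn_kernelBound (p₀.2+1)).mul_const C) measurableSet_Ioc
    · have hzero : (volume : Measure ℝ) ({0, p₀.2} : Set ℝ) = 0 :=
        (Set.toFinite _).measure_zero volume
      have hae : ∀ᵐ s : ℝ, s ∉ ({0, p₀.2} : Set ℝ) := measure_eq_zero_iff_ae_notMem.mp hzero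
      filter_upwards [hae] with s hs
      simp only [Set.mem_insert_iff, Set.mem_singleton_iff, not_or] at hs
      obtain ⟨hs0, hst⟩ := hs
      rcases le_or_gt s 0 with hsle | hspos
      · have : (fun p : ℝ × ℝ => Set.indicator (Set.Ioc 0 p.2)
            (fun s => freeKernel s p.1 * f (p.2 - s)) s) = fun _ => 0 :=
          funext fun p => Set.indicator_of_notMem (s := Set.Ioc (0:ℝ) p.2)
            (fun h => absurd (Set.mem_Ioc.mp h).1 (not_lt.mpr hsle)) _
        rw [this]
        exact continuousAt_const
      · rcases lt_or_gt_of_ne hst with hlt | hgt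
        · have hev : ∀ᶠ p : ℝ × ℝ in nhds p₀, s < p.2 :=
            (isOpen_lt continuous_const continuous_snd).eventually_mem hlt
          have hcont : ContinuousAt (fun p : ℝ × ℝ => freeKernel s p.1 * f (p.2 - s)) p₀ := by
            apply Continuous.continuousAt
            exact ((freeKernel_contX hspos).comp continuous_fst).mul
              (hf.comp (continuous_snd.sub continuous_const))
          apply hcont.congr
          filter_upwards [hev] with p hp
          show freeKernel s p.1 * f (p.2 - s)
            = Set.indicator (Set.Ioc 0 p.2) (fun s' => freeKernel s' p.1 * f (p.2 - s')) s
          rw [Set.indicator_of_mem (Set.mem_Ioc.mpr ⟨hspos, hp.le⟩)]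
        · have hev : ∀ᶠ p : ℝ × ℝ in nhds p₀, p.2 < s :=
            (isOpen_lt continuous_snd continuous_const).eventually_mem hgt
          apply (continuousAt_const (y := (0:ℂ))).congr
          filter_upwards [hev] with p hp
          exact (Set.indicator_of_notMem (s := Set.Ioc (0:ℝ) p.2)
            (fun h => absurd (Set.mem_Ioc.mp h).2 (not_le.mpr hp)) _).symm
  apply hGcont.continuousOn.congr
  intro p hp
  have hp2 : (0:ℝ) ≤ p.2 := (Set.mem_prod.mp hp).2
  show (∫ s in (0:ℝ)..p.2, freeKernel s p.1 * f (p.2 - s)) = G p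
  rw [hGdef]
  simp only
  rw [intervalIntegral.integral_of_le hp2, ← integral_indicator measurableSet_Ioc]

lemma grad_contDiff (U : ℂ → ℝ) (hU : ContDiff ℝ 2 U) : ContDiff ℝ 1 (grad U) := by
  have h1 : ContDiff ℝ 1 (fderiv ℝ U) := hU.fderiv_right (by norm_num)
  unfold grad
  exact ((Complex.ofRealCLM.contDiff.comp
      (((ContinuousLinearMap.apply ℝ ℝ (1:ℂ)).contDiff).comp h1)).add
    (((Complex.ofRealCLM.contDiff.comp
      (((ContinuousLinearMap.apply ℝ ℝ (Complex.I)).contDiff).comp h1))).mul contDiff_const))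

lemma nonlin_lipschitz (U : ℂ → ℝ) (hU : ContDiff ℝ 2 U) (U₂ : ℝ) (hU2pos : 0 < U₂)
    (hU2 : ∀ z : ℂ, ‖fderiv ℝ (grad U) z‖ ≤ U₂) (a b : ℂ) :
    ‖nonlin U a - nonlin U b‖ ≤ U₂ * ‖a - b‖ := by
  have hdiff : Differentiable ℝ (grad U) :=
    (grad_contDiff U hU).differentiable (by norm_num)
  have hlip : LipschitzWith U₂.toNNReal (grad U) := by
    apply lipschitzWith_of_nnnorm_fderiv_le hdiff
    intro z
    rw [← NNReal.coe_le_coe, coe_nnnorm, Real.coe_toNNReal _ hU2pos.le]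
    exact hU2 z
  have := hlip.dist_le_mul a b
  rw [dist_eq_norm, dist_eq_norm, Real.coe_toNNReal _ hU2pos.le] at this
  calc ‖nonlin U a - nonlin U b‖ = ‖grad U a - grad U b‖ := by
        unfold nonlin; rw [← norm_neg]; ring_nf
    _ ≤ U₂ * ‖a - b‖ := this

end Helpers

set_option maxHeartbeats 2000000 in
/-- **Local well-posedness in `C_b`.**
Assume moreover `sup|∇^kU| ≤ U_k < ∞` for `k = 0,1,2` with `U₂ > 0`, and set
`τ = 1/(4U₂²)`.  Then for every `φ ∈ H¹(ℝ)` there is a unique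
`ψ ∈ C_b(ℝ×[0,τ];ℂ)` satisfying the Duhamel equation with data `φ`. -/
theorem local_wellposedness_Cb
    (U : ℂ → ℝ) (u : ℝ → ℝ) (U₀ U₁ U₂ : ℝ)
    (hU : ContDiff ℝ 2 U)
    (hUinv : ∀ z : ℂ, U z = u (‖z‖ ^ 2))
    (hU0 : ∀ z : ℂ, |U z| ≤ U₀)
    (hU1 : ∀ z : ℂ, ‖grad U z‖ ≤ U₁)
    (hU2 : ∀ z : ℂ, ‖fderiv ℝ (grad U) z‖ ≤ U₂)
    (hU2pos : 0 < U₂)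
    (φ : H1) :
    ∃ ψ : ℝ → ℝ → ℂ,
      CbOn ψ (Set.Icc 0 (1 / (4 * U₂ ^ 2))) ∧
      IsDuhamelSolution (nonlin U) φ ψ (Set.Icc 0 (1 / (4 * U₂ ^ 2))) ∧
      ∀ ψ' : ℝ → ℝ → ℂ,
        CbOn ψ' (Set.Icc 0 (1 / (4 * U₂ ^ 2))) →
        IsDuhamelSolution (nonlin U) φ ψ' (Set.Icc 0 (1 / (4 * U₂ ^ 2))) →
        ∀ x : ℝ, ∀ t ∈ Set.Icc (0 : ℝ) (1 / (4 * U₂ ^ 2)), ψ' x t = ψ x t := by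
  set τ : ℝ := 1 / (4 * U₂ ^ 2) with hτdef
  have hτpos : 0 < τ := by rw [hτdef]; positivity
  have hτ0 : (0:ℝ) ≤ τ := hτpos.le
  have hU1nn : 0 ≤ U₁ := le_trans (norm_nonneg _) (hU1 0)
  set q : ℝ := (2*π) ^ (-(1/2) : ℝ) with hqdef
  have hq0 : 0 ≤ q := Real.rpow_nonneg (by positivity) _
  have hq1 : q < 1 := by
    rw [hqdef]
    exact Real.rpow_lt_one_of_one_lt_of_neg (by nlinarith [Real.pi_gt_three]) (by norm_num)
  have hFb : ∀ z : ℂ, ‖nonlin U z‖ ≤ U₁ := fun z => by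
    show ‖-grad U z‖ ≤ U₁
    rw [norm_neg]; exact hU1 z
  have hFlip := nonlin_lipschitz U hU U₂ hU2pos hU2
  have hFcont : Continuous (nonlin U) := ((grad_contDiff U hU).continuous).neg
  have hsqτ : τ ^ (1/2 : ℝ) = 1/(2*U₂) := by
    have h1 : τ = (1/(2*U₂))^(2:ℕ) := by
      rw [hτdef]; field_simp; ring
    rw [h1, ← Real.rpow_natCast (1/(2*U₂)) 2, ← Real.rpow_mul (by positivity)]
    norm_num
  have hKey : ∀ t ∈ Set.Icc (0:ℝ) τ, U₂ * ((2*π) ^ (-(1/2):ℝ) * (2 * t ^ (1/2:ℝ))) ≤ q := by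
    intro t ht
    have h2 : t ^ (1/2:ℝ) ≤ 1/(2*U₂) := by
      rw [← hsqτ]; exact Real.rpow_le_rpow ht.1 ht.2 (by norm_num)
    have h3 : U₂ * ((2*π) ^ (-(1/2):ℝ) * (2 * t ^ (1/2:ℝ)))
        ≤ U₂ * ((2*π) ^ (-(1/2):ℝ) * (2 * (1/(2*U₂)))) := by
      have hb : (0:ℝ) ≤ (2*π) ^ (-(1/2):ℝ) := Real.rpow_nonneg (by positivity) _
      gcongr
    refine h3.trans ?_
    rw [hqdef, show U₂ * ((2*π) ^ (-(1/2):ℝ) * (2 * (1/(2*U₂))))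
      = (2*π) ^ (-(1/2):ℝ) * (U₂ * (1/U₂)) from by ring,
      mul_one_div, div_self (ne_of_gt hU2pos), mul_one]
  let X := C(Set.Icc (0:ℝ) τ, ℂ)
  have hXne : Nonempty X := ⟨ContinuousMap.const _ 0⟩
  let ext : X → ℝ → ℂ := fun a r => a (Set.projIcc 0 τ hτ0 r)
  have hext_cont : ∀ a : X, Continuous (ext a) := fun a => a.continuous.comp continuous_projIcc
  have hext_dist : ∀ (a b : X) (r : ℝ), ‖ext b r - ext a r‖ ≤ dist a b := by
    intro a b r
    rw [← dist_eq_norm, dist_comm]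
    exact ContinuousMap.dist_apply_le_dist _
  let B : X → ℝ × ℝ → ℂ := fun a p =>
    W p.2 φ p.1 - ∫ s in (0:ℝ)..p.2, freeKernel s p.1 * nonlin U (ext a (p.2 - s))
  have hBcont : ∀ a : X, ContinuousOn (B a) (Set.univ ×ˢ Set.Ici 0) := fun a =>
    ((W_cont φ).continuousOn).sub
      (duhamel_cont _ (hFcont.comp (hext_cont a)) U₁ (fun r => hFb _))
  have hmem : ∀ t : Set.Icc (0:ℝ) τ, ((0:ℝ), (t:ℝ)) ∈ Set.univ ×ˢ Set.Ici (0:ℝ) :=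
    fun t => Set.mem_prod.mpr ⟨Set.mem_univ _, Set.mem_Ici.mpr t.2.1⟩
  let T : X → X := fun a =>
    ⟨fun t => B a (0, ↑t), by
      exact (hBcont a).comp_continuous (continuous_const.prodMk continuous_subtype_val) hmem⟩
  have hconta : ∀ a : X, ContinuousOn (fun r => nonlin U (ext a r)) (Set.Icc 0 τ) :=
    fun a => (hFcont.comp (hext_cont a)).continuousOn
  have hInt : ∀ (a : X) (t : ℝ), t ∈ Set.Icc (0:ℝ) τ → ∀ x : ℝ,
      IntervalIntegrable (fun s => freeKernel s x * nonlin U (ext a (t - s))) volume 0 t :=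
    fun a t ht x => duhamel_intervalIntegrable _ (hconta a) U₁ (fun r _ => hFb _) ht x
  have hTlip : ∀ a b : X, dist (T a) (T b) ≤ q * dist a b := by
    intro a b
    rw [ContinuousMap.dist_le (mul_nonneg hq0 dist_nonneg)]
    intro t
    have ht : (↑t:ℝ) ∈ Set.Icc (0:ℝ) τ := t.2
    rw [dist_eq_norm]
    have heq : T a t - T b t =
        ∫ s in (0:ℝ)..(↑t:ℝ), freeKernel s 0 *
          (nonlin U (ext b (↑t - s)) - nonlin U (ext a (↑t - s))) := by
      show B a (0, ↑t) - B b (0, ↑t) = _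
      rw [intervalIntegral.integral_congr
        (g := fun s => freeKernel s 0 * nonlin U (ext b ((↑t:ℝ) - s))
          - freeKernel s 0 * nonlin U (ext a ((↑t:ℝ) - s))) (fun s _ => mul_sub _ _ _),
        intervalIntegral.integral_sub (hInt b ↑t ht 0) (hInt a ↑t ht 0)]
      show W ↑t φ 0 - _ - (W ↑t φ 0 - _) = _
      ring
    rw [heq]
    have hnorm := duhamel_norm_le (fun r => nonlin U (ext b r) - nonlin U (ext a r))
      (T := τ) ((hconta b).sub (hconta a)) (U₂ * dist a b)
      (fun r _ => le_trans (hFlip _ _)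
        (mul_le_mul_of_nonneg_left (hext_dist a b r) hU2pos.le)) ht 0
    refine hnorm.trans ?_
    calc (U₂ * dist a b) * ((2*π) ^ (-(1/2):ℝ) * (2 * (↑t:ℝ) ^ (1/2:ℝ)))
        = dist a b * (U₂ * ((2*π) ^ (-(1/2):ℝ) * (2 * (↑t:ℝ) ^ (1/2:ℝ)))) := by ring
      _ ≤ dist a b * q := mul_le_mul_of_nonneg_left (hKey _ ht) dist_nonneg
      _ = q * dist a b := mul_comm _ _
  have hcontr : ContractingWith ⟨q, hq0⟩ T :=
    ⟨(NNReal.coe_lt_coe (r₁ := ⟨q, hq0⟩) (r₂ := 1)).mp hq1, LipschitzWith.of_dist_le_mul hTlip⟩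
  let astar : X := ContractingWith.fixedPoint T hcontr
  have hfix : T astar = astar := hcontr.fixedPoint_isFixedPt
  set ψ : ℝ → ℝ → ℂ := fun x t => B astar (x, t) with hψdef
  have hψ0 : ∀ r ∈ Set.Icc (0:ℝ) τ, ψ 0 r = ext astar r := by
    intro r hr
    have h1 : ψ 0 r = T astar ⟨r, hr⟩ := rfl
    rw [h1, hfix]
    show astar ⟨r, hr⟩ = astar (Set.projIcc 0 τ hτ0 r)
    rw [Set.projIcc_of_mem hτ0 hr]
  have hDuh : IsDuhamelSolution (nonlin U) φ ψ (Set.Icc 0 τ) := by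
    intro x t ht
    show W t φ x - _ = W t φ x - _
    congr 1
    apply intervalIntegral.integral_congr
    intro s hs
    rw [Set.uIcc_of_le ht.1, Set.mem_Icc] at hs
    simp only
    rw [hψ0 (t - s) (Set.mem_Icc.mpr ⟨by linarith [hs.2], by linarith [hs.1, ht.2]⟩)]
  have hCb : CbOn ψ (Set.Icc 0 τ) := by
    constructor
    · have he : (fun p : ℝ × ℝ => ψ p.1 p.2) = B astar := rfl
      rw [he]
      exact (hBcont astar).mono (Set.prod_mono (subset_refl _) Set.Icc_subset_Ici_self)
    · refine ⟨(2*π)⁻¹ * (∫ k : ℝ, ‖φ.hat k‖) +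
        U₁ * ((2*π) ^ (-(1/2):ℝ) * (2 * τ ^ (1/2:ℝ))), ?_⟩
      intro x t ht
      have h1 : ‖ψ x t‖ ≤ ‖W t φ x‖ +
          ‖∫ s in (0:ℝ)..t, freeKernel s x * nonlin U (ext astar (t - s))‖ := norm_sub_le _ _
      refine h1.trans (add_le_add (W_bound φ t x) ?_)
      refine (duhamel_norm_le _ (hconta astar) U₁ (fun r _ => hFb _) ht x).trans ?_
      have h2 : t ^ (1/2:ℝ) ≤ τ ^ (1/2:ℝ) := Real.rpow_le_rpow ht.1 ht.2 (by norm_num)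
      have hb : (0:ℝ) ≤ (2*π) ^ (-(1/2):ℝ) := Real.rpow_nonneg (by positivity) _
      gcongr
  refine ⟨ψ, hCb, hDuh, ?_⟩
  intro ψ' hCb' hDuh'
  obtain ⟨hcont', M', hM'⟩ := hCb'
  obtain ⟨hcontψ, M, hM⟩ := hCb
  have hcψ' : ContinuousOn (fun r : ℝ => ψ' 0 r) (Set.Icc 0 τ) := by
    apply hcont'.comp
      (Continuous.continuousOn (by fun_prop : Continuous fun r : ℝ => ((0:ℝ), r)))
    intro r hr
    exact Set.mem_prod.mpr ⟨Set.mem_univ _, hr⟩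
  have hcψ : ContinuousOn (fun r : ℝ => ψ 0 r) (Set.Icc 0 τ) := by
    apply hcontψ.comp
      (Continuous.continuousOn (by fun_prop : Continuous fun r : ℝ => ((0:ℝ), r)))
    intro r hr
    exact Set.mem_prod.mpr ⟨Set.mem_univ _, hr⟩
  set S : Set ℝ := (fun t => ‖ψ' 0 t - ψ 0 t‖) '' Set.Icc 0 τ with hSdef
  have hne : S.Nonempty := ⟨_, ⟨0, Set.mem_Icc.mpr ⟨le_refl 0, hτ0⟩, rfl⟩⟩
  have hbdd : BddAbove S := by
    refine ⟨M' + M, ?_⟩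
    rintro _ ⟨t, ht, rfl⟩
    exact (norm_sub_le _ _).trans (add_le_add (hM' 0 t ht) (hM 0 t ht))
  set D : ℝ := sSup S with hDdef
  have hDle : ∀ t ∈ Set.Icc (0:ℝ) τ, ‖ψ' 0 t - ψ 0 t‖ ≤ D :=
    fun t ht => le_csSup hbdd ⟨t, ht, rfl⟩
  have hD0 : 0 ≤ D :=
    le_trans (norm_nonneg _) (hDle 0 (Set.mem_Icc.mpr ⟨le_refl 0, hτ0⟩))
  have hI' : ∀ x : ℝ, ∀ t ∈ Set.Icc (0:ℝ) τ,
      IntervalIntegrable (fun s => freeKernel s x * nonlin U (ψ' 0 (t - s))) volume 0 t :=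
    fun x t ht => duhamel_intervalIntegrable _ (hFcont.comp_continuousOn hcψ') U₁
      (fun r _ => hFb _) ht x
  have hI : ∀ x : ℝ, ∀ t ∈ Set.Icc (0:ℝ) τ,
      IntervalIntegrable (fun s => freeKernel s x * nonlin U (ψ 0 (t - s))) volume 0 t :=
    fun x t ht => duhamel_intervalIntegrable _ (hFcont.comp_continuousOn hcψ) U₁
      (fun r _ => hFb _) ht x
  have hstep : ∀ t ∈ Set.Icc (0:ℝ) τ, ‖ψ' 0 t - ψ 0 t‖ ≤ q * D := by
    intro t ht
    have heq : ψ' 0 t - ψ 0 t = ∫ s in (0:ℝ)..t, freeKernel s 0 *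
        (nonlin U (ψ 0 (t - s)) - nonlin U (ψ' 0 (t - s))) := by
      rw [hDuh' 0 t ht, hDuh 0 t ht]
      rw [intervalIntegral.integral_congr
        (g := fun s => freeKernel s 0 * nonlin U (ψ 0 (t - s))
          - freeKernel s 0 * nonlin U (ψ' 0 (t - s))) (fun s _ => mul_sub _ _ _),
        intervalIntegral.integral_sub (hI 0 t ht) (hI' 0 t ht)]
      ring
    rw [heq]
    have hnorm := duhamel_norm_le (fun r => nonlin U (ψ 0 r) - nonlin U (ψ' 0 r)) (T := τ)
      ((hFcont.comp_continuousOn hcψ).sub (hFcont.comp_continuousOn hcψ')) (U₂ * D)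
      (fun r hr => le_trans (hFlip _ _) (mul_le_mul_of_nonneg_left
        (by rw [norm_sub_rev]; exact hDle r hr) hU2pos.le)) ht 0
    refine hnorm.trans ?_
    calc (U₂ * D) * ((2*π) ^ (-(1/2):ℝ) * (2 * t ^ (1/2:ℝ)))
        = D * (U₂ * ((2*π) ^ (-(1/2):ℝ) * (2 * t ^ (1/2:ℝ)))) := by ring
      _ ≤ D * q := mul_le_mul_of_nonneg_left (hKey t ht) hD0
      _ = q * D := mul_comm _ _
  have hDq : D ≤ q * D := csSup_le hne (by rintro _ ⟨t, ht, rfl⟩; exact hstep t ht)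
  have hDzero : D = 0 := by nlinarith
  have hall : ∀ r ∈ Set.Icc (0:ℝ) τ, ψ' 0 r = ψ 0 r := by
    intro r hr
    have h1 := hstep r hr
    rw [hDzero, mul_zero] at h1
    have h2 : ‖ψ' 0 r - ψ 0 r‖ = 0 := le_antisymm h1 (norm_nonneg _)
    exact sub_eq_zero.mp (norm_eq_zero.mp h2)
  intro x t ht
  rw [hDuh' x t ht, hDuh x t ht]
  congr 1
  apply intervalIntegral.integral_congr
  intro s hs
  rw [Set.uIcc_of_le ht.1, Set.mem_Icc] at hs
  simp only
  rw [hall (t - s) (Set.mem_Icc.mpr ⟨by linarith [hs.2], by linarith [hs.1, ht.2]⟩)]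


end SNLS
end
end

section
/- Hölder continuity in time of the free Schrödinger flow: There exists a constant C > 0 such that for every φ ∈ H¹(ℝ), every x ∈ ℝ, and all t, t' ∈ ℝ, |W_{t'}φ(x) − W_tφ(x)| ≤ C |t' − t|^{1/4} ‖φ‖_{H¹}. -/
/-!  Common framework for the Schrödinger equation coupled to a nonlinear
oscillator (point nonlinearity), following Komech–Komech.

The Sobolev space `H¹(ℝ)` is described through the Fourier side: an element
of `H¹(ℝ)` is (identified with) a measurable function `hat : ℝ → ℂ`
(its Fourier transform, nonunitary convention `φ̂(k) = ∫ e^{-ikx} φ(x) dx`)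
such that `(1+k²)^{1/2} φ̂ ∈ L²(ℝ)`.  Since `φ̂ ∈ L¹`, the continuous
representative `φ(x) = (2π)⁻¹ ∫ e^{ikx} φ̂(k) dk` is defined pointwise, so
`φ(0)` makes sense.  Plancherel gives `‖φ‖²_{L²} = (2π)⁻¹∫|φ̂|²` and
`‖φ'‖²_{L²} = (2π)⁻¹∫ k²|φ̂|²`. -/

noncomputable section

open MeasureTheory Real Set

namespace SNLS

/-- norm of `exp (I θ)` for real `θ`. -/
lemma norm_exp_I_mul_real (r : ℝ) : ‖Complex.exp (Complex.I * (r : ℂ))‖ = 1 := by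
  rw [mul_comm]; exact Complex.norm_exp_ofReal_mul_I r

/-- `‖e^{iθ} - 1‖ ≤ min 2 |θ|`. -/
lemma norm_exp_I_mul_sub_one_le (θ : ℝ) :
    ‖Complex.exp (Complex.I * (θ : ℂ)) - 1‖ ≤ min 2 |θ| := by
  refine le_min ?_ ?_
  · calc ‖Complex.exp (Complex.I * (θ : ℂ)) - 1‖
        ≤ ‖Complex.exp (Complex.I * (θ : ℂ))‖ + ‖(1 : ℂ)‖ := norm_sub_le _ _
      _ = 2 := by rw [norm_exp_I_mul_real, norm_one]; norm_num
  · have hre : (Complex.exp (Complex.I * (θ : ℂ)) - 1).re = Real.cos θ - 1 := by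
      simp [Complex.exp_re]
    have him : (Complex.exp (Complex.I * (θ : ℂ)) - 1).im = Real.sin θ := by
      simp [Complex.exp_im]
    have hcos : Real.cos θ = 1 - 2 * Real.sin (θ / 2) ^ 2 := by
      have h1 := Real.cos_two_mul (θ / 2)
      have h2 := Real.sin_sq_add_cos_sq (θ / 2)
      have h3 : 2 * (θ / 2) = θ := by ring
      rw [h3] at h1; linarith
    have hsin : |Real.sin (θ / 2)| ≤ |θ / 2| := Real.abs_sin_le_abs
    have hsq : Real.sin (θ / 2) ^ 2 ≤ (θ / 2) ^ 2 := by
      have := sq_abs (Real.sin (θ / 2)); have := sq_abs (θ / 2)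
      nlinarith [abs_nonneg (Real.sin (θ / 2))]
    have hkey : (Real.cos θ - 1) ^ 2 + Real.sin θ ^ 2 ≤ θ ^ 2 := by
      have h2 := Real.sin_sq_add_cos_sq θ
      nlinarith
    rw [Complex.norm_def, Complex.normSq_apply, hre, him]
    calc Real.sqrt ((Real.cos θ - 1) * (Real.cos θ - 1) + Real.sin θ * Real.sin θ)
        ≤ Real.sqrt (θ ^ 2) := by
          apply Real.sqrt_le_sqrt; nlinarith [hkey]
      _ = |θ| := Real.sqrt_sq_eq_abs θ

/-- `φ̂` is integrable for `φ ∈ H¹`. -/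
lemma H1.int_norm_hat (φ : H1) : Integrable (fun k : ℝ => ‖φ.hat k‖) := by
  refine Integrable.mono' (integrable_inv_one_add_sq.add φ.finite)
    φ.meas.norm (Filter.Eventually.of_forall fun k => ?_)
  have hw : (0 : ℝ) < 1 + k ^ 2 := by positivity
  have h := norm_nonneg (φ.hat k)
  simp only [Pi.add_apply, norm_norm]
  rw [show (1 + k ^ 2)⁻¹ + (1 + k ^ 2) * ‖φ.hat k‖ ^ 2
      = ((1 + k ^ 2) * ‖φ.hat k‖ ^ 2 * (1 + k ^ 2) + 1) / (1 + k ^ 2) from by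
    field_simp; ring, le_div_iff₀ hw]
  nlinarith [sq_nonneg ((1 + k ^ 2) * ‖φ.hat k‖ - 1)]

lemma H1.int_exp (φ : H1) (c : ℝ → ℝ) (hc : Continuous c) :
    Integrable (fun k : ℝ => Complex.exp (Complex.I * ((c k : ℝ) : ℂ)) * φ.hat k) := by
  refine Integrable.mono' φ.int_norm_hat ?_ (Filter.Eventually.of_forall fun k => ?_)
  · exact ((Complex.continuous_exp.comp
      (continuous_const.mul (Complex.continuous_ofReal.comp hc))).aestronglyMeasurable).mul φ.meas
  · rw [norm_mul, norm_exp_I_mul_real, one_mul]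

/-- Integrability of the kernel integrand. -/
lemma int_min_sq {s : ℝ} (hs : 0 ≤ s) :
    Integrable (fun k : ℝ => (min 2 (k ^ 2 * s)) ^ 2 / (1 + k ^ 2)) := by
  have hcont : Continuous (fun k : ℝ => (min 2 (k ^ 2 * s)) ^ 2 / (1 + k ^ 2)) := by
    apply Continuous.div
    · exact ((continuous_const.min ((continuous_pow 2).mul continuous_const)).pow 2)
    · continuity
    · intro k; positivity
  refine Integrable.mono' (integrable_inv_one_add_sq.const_mul 4)
    hcont.aestronglyMeasurable (Filter.Eventually.of_forall fun k => ?_)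
  have hw : (0 : ℝ) < 1 + k ^ 2 := by positivity
  have hm0 : 0 ≤ min 2 (k ^ 2 * s) := le_min (by norm_num) (mul_nonneg (sq_nonneg k) hs)
  have hm2 : min 2 (k ^ 2 * s) ≤ 2 := min_le_left _ _
  have hsq4 : (min 2 (k ^ 2 * s)) ^ 2 ≤ 4 := by nlinarith
  rw [Real.norm_eq_abs, abs_div, abs_of_pos hw, abs_of_nonneg (sq_nonneg _),
    div_le_iff₀ hw]
  have hinv : 4 * (1 + k ^ 2)⁻¹ * (1 + k ^ 2) = 4 := by field_simp
  nlinarith [hsq4, hinv]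

/-- The kernel integral bound `J(s) ≤ 8π√s` for `s > 0`. -/
lemma kernel_integral_le {s : ℝ} (hs : 0 < s) :
    (∫ k : ℝ, (min 2 (k ^ 2 * s)) ^ 2 / (1 + k ^ 2)) ≤ 8 * π * Real.sqrt s := by
  have h1s : (0 : ℝ) < 1 + s := by linarith
  set c : ℝ := Real.sqrt (s / (1 + s)) with hc
  have hcpos : 0 < c := Real.sqrt_pos.mpr (by positivity)
  have hc2 : c ^ 2 = s / (1 + s) := Real.sq_sqrt (by positivity)
  have hfun : ∀ k : ℝ, ((1 + s) + s * k ^ 2)⁻¹ = (1 + s)⁻¹ * (1 + (c * k) ^ 2)⁻¹ := by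
    intro k
    rw [← mul_inv]
    congr 1
    rw [mul_pow, hc2]
    field_simp
  have hintc : Integrable (fun k : ℝ => (1 + (c * k) ^ 2)⁻¹) := by
    have := integrable_inv_one_add_sq.comp_mul_left' hcpos.ne'
    simpa using this
  have hint : Integrable (fun k : ℝ => 8 * s * ((1 + s) + s * k ^ 2)⁻¹) := by
    have h2 := (hintc.const_mul ((1 + s)⁻¹)).const_mul (8 * s)
    refine h2.congr (Filter.Eventually.of_forall fun k => ?_)
    show 8 * s * ((1 + s)⁻¹ * (1 + (c * k) ^ 2)⁻¹) = 8 * s * ((1 + s) + s * k ^ 2)⁻¹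
    rw [hfun k]
  have hpt : ∀ k : ℝ, (min 2 (k ^ 2 * s)) ^ 2 / (1 + k ^ 2)
      ≤ 8 * s * ((1 + s) + s * k ^ 2)⁻¹ := by
    intro k
    have hw : (0 : ℝ) < 1 + k ^ 2 := by positivity
    have hw2 : (0 : ℝ) < (1 + s) + s * k ^ 2 := by positivity
    rw [show 8 * s * ((1 + s) + s * k ^ 2)⁻¹ = 8 * s / ((1 + s) + s * k ^ 2) from by ring,
      div_le_div_iff₀ hw hw2]
    have hk2 : (0 : ℝ) ≤ k ^ 2 := sq_nonneg k
    have hks : 0 ≤ k ^ 2 * s := mul_nonneg hk2 hs.le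
    rcases le_total 2 (k ^ 2 * s) with h | h
    · rw [min_eq_left h]
      have h8 : (8 : ℝ) ≤ 4 * (s * k ^ 2) := by nlinarith
      nlinarith [mul_nonneg hs.le hk2, hs.le]
    · rw [min_eq_right h]
      have h1 : (k ^ 2 * s) ^ 2 ≤ 2 * (k ^ 2 * s) := by nlinarith
      have h4 : (k ^ 2 * s) ^ 2 ≤ 4 := by nlinarith
      have h2 : (k ^ 2 * s) ^ 2 * s ≤ 4 * s := by nlinarith
      have h3 : (k ^ 2 * s) ^ 2 * (s * k ^ 2) ≤ 4 * (s * k ^ 2) := by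
        nlinarith [mul_nonneg hs.le hk2]
      nlinarith [mul_nonneg hs.le hk2, hs.le]
  have hmono : (∫ k : ℝ, (min 2 (k ^ 2 * s)) ^ 2 / (1 + k ^ 2))
      ≤ ∫ k : ℝ, 8 * s * ((1 + s) + s * k ^ 2)⁻¹ :=
    integral_mono (int_min_sq hs.le) hint hpt
  have hval : (∫ k : ℝ, 8 * s * ((1 + s) + s * k ^ 2)⁻¹)
      = 8 * s * ((1 + s)⁻¹ * (c⁻¹ * π)) := by
    rw [show (fun k : ℝ => 8 * s * ((1 + s) + s * k ^ 2)⁻¹)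
        = fun k : ℝ => 8 * s * ((1 + s)⁻¹ * (1 + (c * k) ^ 2)⁻¹) from
      funext fun k => by rw [hfun k]]
    rw [integral_const_mul, integral_const_mul]
    congr 1
    have := MeasureTheory.Measure.integral_comp_mul_left (fun y : ℝ => (1 + y ^ 2)⁻¹) c
    rw [this, integral_univ_inv_one_add_sq, smul_eq_mul, abs_inv, abs_of_pos hcpos]
  have hle : 8 * s * ((1 + s)⁻¹ * (c⁻¹ * π)) ≤ 8 * π * Real.sqrt s := by
    have hcval : c = Real.sqrt s / Real.sqrt (1 + s) := Real.sqrt_div hs.le (1 + s)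
    have hss : Real.sqrt (1 + s) * Real.sqrt (1 + s) = 1 + s := Real.mul_self_sqrt h1s.le
    have hs2 : Real.sqrt s * Real.sqrt s = s := Real.mul_self_sqrt hs.le
    have hsqpos : 0 < Real.sqrt s := Real.sqrt_pos.mpr hs
    have hsq1pos : 0 < Real.sqrt (1 + s) := Real.sqrt_pos.mpr h1s
    have hone : 1 ≤ Real.sqrt (1 + s) := Real.one_le_sqrt.mpr (by linarith)
    have key : s * ((1 + s)⁻¹ * c⁻¹) ≤ Real.sqrt s := by
      rw [hcval, inv_div]
      rw [show s * ((1 + s)⁻¹ * (Real.sqrt (1 + s) / Real.sqrt s))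
          = s * Real.sqrt (1 + s) / ((1 + s) * Real.sqrt s) from by
        rw [div_eq_mul_inv, div_eq_mul_inv, mul_inv]; ring,
        div_le_iff₀ (by positivity)]
      have hr : Real.sqrt s * ((1 + s) * Real.sqrt s) = s * (1 + s) := by
        rw [show Real.sqrt s * ((1 + s) * Real.sqrt s)
            = Real.sqrt s * Real.sqrt s * (1 + s) from by ring, hs2]
      rw [hr]
      have hsl : Real.sqrt (1 + s) ≤ 1 + s := by nlinarith
      nlinarith
    calc 8 * s * ((1 + s)⁻¹ * (c⁻¹ * π)) = 8 * π * (s * ((1 + s)⁻¹ * c⁻¹)) := by ring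
      _ ≤ 8 * π * Real.sqrt s := by
          exact mul_le_mul_of_nonneg_left key (by positivity)
  calc (∫ k : ℝ, (min 2 (k ^ 2 * s)) ^ 2 / (1 + k ^ 2))
      ≤ 8 * s * ((1 + s)⁻¹ * (c⁻¹ * π)) := hval ▸ hmono
    _ ≤ 8 * π * Real.sqrt s := hle

/-- The main a-parametrized estimate (AM–GM form of Cauchy–Schwarz). -/
lemma main_est (φ : H1) (x t t' a : ℝ) (ha : 0 < a) :
    ‖W t' φ x - W t φ x‖ ≤ (2 * π)⁻¹ *
      (a / 2 * (∫ k : ℝ, (min 2 (k ^ 2 * |t' - t|)) ^ 2 / (1 + k ^ 2)) +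
        (2 * a)⁻¹ * (∫ k : ℝ, (1 + k ^ 2) * ‖φ.hat k‖ ^ 2)) := by
  set s := |t' - t| with hsdef
  have hI1 : Integrable (fun k : ℝ =>
      Complex.exp (Complex.I * ((k * x + k ^ 2 * t' : ℝ) : ℂ)) * φ.hat k) :=
    φ.int_exp (fun k => k * x + k ^ 2 * t') (by continuity)
  have hI2 : Integrable (fun k : ℝ =>
      Complex.exp (Complex.I * ((k * x + k ^ 2 * t : ℝ) : ℂ)) * φ.hat k) :=
    φ.int_exp (fun k => k * x + k ^ 2 * t) (by continuity)
  have hsub : W t' φ x - W t φ x = (2 * π)⁻¹ *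
      ∫ k : ℝ, (Complex.exp (Complex.I * ((k * x + k ^ 2 * t' : ℝ) : ℂ))
        - Complex.exp (Complex.I * ((k * x + k ^ 2 * t : ℝ) : ℂ))) * φ.hat k := by
    unfold W
    rw [← mul_sub, ← integral_sub hI1 hI2]
    congr 1
    exact integral_congr_ae (Filter.Eventually.of_forall fun k => by ring)
  have hnorm2pi : ‖((((2 * π)⁻¹ : ℝ)) : ℂ)‖ = (2 * π)⁻¹ := by
    rw [Complex.norm_real, Real.norm_eq_abs, abs_of_pos (by positivity)]
  have hptwise : ∀ k : ℝ,
      ‖(Complex.exp (Complex.I * ((k * x + k ^ 2 * t' : ℝ) : ℂ))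
        - Complex.exp (Complex.I * ((k * x + k ^ 2 * t : ℝ) : ℂ))) * φ.hat k‖
      ≤ a / 2 * ((min 2 (k ^ 2 * s)) ^ 2 / (1 + k ^ 2))
        + (2 * a)⁻¹ * ((1 + k ^ 2) * ‖φ.hat k‖ ^ 2) := by
    intro k
    have hfac : Complex.exp (Complex.I * ((k * x + k ^ 2 * t' : ℝ) : ℂ))
        - Complex.exp (Complex.I * ((k * x + k ^ 2 * t : ℝ) : ℂ))
        = Complex.exp (Complex.I * ((k * x + k ^ 2 * t : ℝ) : ℂ)) *
          (Complex.exp (Complex.I * ((k ^ 2 * (t' - t) : ℝ) : ℂ)) - 1) := by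
      rw [show Complex.I * ((k * x + k ^ 2 * t' : ℝ) : ℂ)
          = Complex.I * ((k * x + k ^ 2 * t : ℝ) : ℂ)
            + Complex.I * ((k ^ 2 * (t' - t) : ℝ) : ℂ) from by push_cast; ring,
        Complex.exp_add]
      ring
    have habs : |k ^ 2 * (t' - t)| = k ^ 2 * s := by
      rw [abs_mul, abs_of_nonneg (sq_nonneg k)]
    have hm : ‖Complex.exp (Complex.I * ((k * x + k ^ 2 * t' : ℝ) : ℂ))
        - Complex.exp (Complex.I * ((k * x + k ^ 2 * t : ℝ) : ℂ))‖ ≤ min 2 (k ^ 2 * s) := by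
      rw [hfac, norm_mul, norm_exp_I_mul_real, one_mul]
      have := norm_exp_I_mul_sub_one_le (k ^ 2 * (t' - t))
      rwa [habs] at this
    set m := min 2 (k ^ 2 * s) with hmdef
    set h := ‖φ.hat k‖ with hhdef
    have hm0 : 0 ≤ m := by
      rcases le_total 0 (k ^ 2 * s) with hc | hc
      · exact le_min (by norm_num) hc
      · exact le_trans (norm_nonneg _) hm
    have hw : (0 : ℝ) < 1 + k ^ 2 := by positivity
    have h0 : (0 : ℝ) ≤ h := norm_nonneg _
    calc ‖(Complex.exp (Complex.I * ((k * x + k ^ 2 * t' : ℝ) : ℂ))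
          - Complex.exp (Complex.I * ((k * x + k ^ 2 * t : ℝ) : ℂ))) * φ.hat k‖
        = ‖Complex.exp (Complex.I * ((k * x + k ^ 2 * t' : ℝ) : ℂ))
          - Complex.exp (Complex.I * ((k * x + k ^ 2 * t : ℝ) : ℂ))‖ * h := norm_mul _ _
      _ ≤ m * h := mul_le_mul_of_nonneg_right hm h0
      _ ≤ a / 2 * (m ^ 2 / (1 + k ^ 2)) + (2 * a)⁻¹ * ((1 + k ^ 2) * h ^ 2) := by
          rw [show a / 2 * (m ^ 2 / (1 + k ^ 2)) + (2 * a)⁻¹ * ((1 + k ^ 2) * h ^ 2)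
              = ((a * m) ^ 2 + ((1 + k ^ 2) * h) ^ 2) / (2 * (a * (1 + k ^ 2))) from by
            field_simp, le_div_iff₀ (by positivity)]
          nlinarith [sq_nonneg (a * m - (1 + k ^ 2) * h)]
  have hRHSint : Integrable (fun k : ℝ =>
      a / 2 * ((min 2 (k ^ 2 * s)) ^ 2 / (1 + k ^ 2))
        + (2 * a)⁻¹ * ((1 + k ^ 2) * ‖φ.hat k‖ ^ 2)) :=
    ((int_min_sq (abs_nonneg (t' - t))).const_mul (a / 2)).add (φ.finite.const_mul (2 * a)⁻¹)
  calc ‖W t' φ x - W t φ x‖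
      = (2 * π)⁻¹ * ‖∫ k : ℝ, (Complex.exp (Complex.I * ((k * x + k ^ 2 * t' : ℝ) : ℂ))
          - Complex.exp (Complex.I * ((k * x + k ^ 2 * t : ℝ) : ℂ))) * φ.hat k‖ := by
        rw [hsub, norm_mul, hnorm2pi]
    _ ≤ (2 * π)⁻¹ * ∫ k : ℝ, ‖(Complex.exp (Complex.I * ((k * x + k ^ 2 * t' : ℝ) : ℂ))
          - Complex.exp (Complex.I * ((k * x + k ^ 2 * t : ℝ) : ℂ))) * φ.hat k‖ := by
        apply mul_le_mul_of_nonneg_left (norm_integral_le_integral_norm _) (by positivity)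
    _ ≤ (2 * π)⁻¹ * ∫ k : ℝ, (a / 2 * ((min 2 (k ^ 2 * s)) ^ 2 / (1 + k ^ 2))
          + (2 * a)⁻¹ * ((1 + k ^ 2) * ‖φ.hat k‖ ^ 2)) := by
        apply mul_le_mul_of_nonneg_left _ (by positivity)
        exact integral_mono_of_nonneg (Filter.Eventually.of_forall fun k => norm_nonneg _)
          hRHSint (Filter.Eventually.of_forall hptwise)
    _ = (2 * π)⁻¹ *
        (a / 2 * (∫ k : ℝ, (min 2 (k ^ 2 * s)) ^ 2 / (1 + k ^ 2)) +
          (2 * a)⁻¹ * (∫ k : ℝ, (1 + k ^ 2) * ‖φ.hat k‖ ^ 2)) := by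
        rw [integral_add ((int_min_sq (abs_nonneg (t' - t))).const_mul (a / 2)) (φ.finite.const_mul (2 * a)⁻¹),
          integral_const_mul, integral_const_mul]

/-- **Hölder continuity in time of the free Schrödinger flow.**
There is `C > 0` such that for every `φ ∈ H¹(ℝ)`, every `x ∈ ℝ` and all
`t, t' ∈ ℝ`, `|W_{t'}φ(x) − W_tφ(x)| ≤ C|t'−t|^{1/4}‖φ‖_{H¹}`. -/
theorem free_flow_holder :
    ∃ C > (0 : ℝ), ∀ (φ : H1) (x t t' : ℝ),
      ‖W t' φ x - W t φ x‖ ≤ C * |t' - t| ^ ((1 : ℝ) / 4) * H1.norm φ := by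
  refine ⟨2, by norm_num, fun φ x t t' => ?_⟩
  set s := |t' - t| with hsdef
  set P := H1.norm φ with hPdef
  have hs0 : 0 ≤ s := abs_nonneg _
  have hP0 : 0 ≤ P := Real.sqrt_nonneg _
  have hnormSq0 : 0 ≤ φ.normSq := by
    unfold H1.normSq
    apply mul_nonneg (by positivity)
    exact integral_nonneg fun k => mul_nonneg (by positivity) (sq_nonneg _)
  have hNval : (∫ k : ℝ, (1 + k ^ 2) * ‖φ.hat k‖ ^ 2) = 2 * π * φ.normSq := by
    unfold H1.normSq
    rw [← mul_assoc, mul_inv_cancel₀ (by positivity : (2 * π : ℝ) ≠ 0), one_mul]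
  rcases eq_or_lt_of_le hs0 with hs | hs
  · -- s = 0 : t' = t
    have ht : t' = t := by
      have : t' - t = 0 := abs_eq_zero.mp hs.symm
      linarith
    rw [ht, sub_self, norm_zero, ← hs, Real.zero_rpow (by norm_num : (1 : ℝ) / 4 ≠ 0)]
    simp
  · -- s > 0
    have hJ := kernel_integral_le hs
    rcases eq_or_lt_of_le hP0 with hP | hP
    · -- P = 0 : norm zero, show LHS ≤ 0
      have hnormSqz : φ.normSq = 0 := by
        have h1 : Real.sqrt φ.normSq = 0 := hP.symm
        have h2 : φ.normSq ≤ 0 := Real.sqrt_eq_zero'.mp h1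
        linarith
      have hNz : (∫ k : ℝ, (1 + k ^ 2) * ‖φ.hat k‖ ^ 2) = 0 := by
        rw [hNval, hnormSqz, mul_zero]
      have hbound : ∀ a : ℝ, 0 < a → ‖W t' φ x - W t φ x‖ ≤ 2 * a * Real.sqrt s := by
        intro a ha
        have h1 := main_est φ x t t' a ha
        rw [hNz, mul_zero, add_zero, ← hsdef] at h1
        calc ‖W t' φ x - W t φ x‖
            ≤ (2 * π)⁻¹ * (a / 2 * ∫ k : ℝ, (min 2 (k ^ 2 * s)) ^ 2 / (1 + k ^ 2)) := h1
          _ ≤ (2 * π)⁻¹ * (a / 2 * (8 * π * Real.sqrt s)) := by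
              apply mul_le_mul_of_nonneg_left _ (by positivity)
              exact mul_le_mul_of_nonneg_left hJ (by positivity)
          _ = 2 * a * Real.sqrt s := by field_simp; ring
      have hLHS : ‖W t' φ x - W t φ x‖ ≤ 0 := by
        by_contra hcon
        push_neg at hcon
        have hsq : 0 < Real.sqrt s := Real.sqrt_pos.mpr hs
        have ha : 0 < ‖W t' φ x - W t φ x‖ / (4 * Real.sqrt s) := by positivity
        have := hbound _ ha
        rw [show 2 * (‖W t' φ x - W t φ x‖ / (4 * Real.sqrt s)) * Real.sqrt s
            = ‖W t' φ x - W t φ x‖ / 2 from by field_simp; ring] at this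
        linarith
      calc ‖W t' φ x - W t φ x‖ ≤ 0 := hLHS
        _ ≤ 2 * s ^ ((1 : ℝ) / 4) * P := by positivity
    · -- P > 0
      set q := s ^ ((1 : ℝ) / 4) with hqdef
      have hq : 0 < q := Real.rpow_pos_of_pos hs _
      have hsqrt : Real.sqrt s = q ^ 2 := by
        rw [Real.sqrt_eq_rpow, hqdef, ← Real.rpow_natCast (s ^ ((1 : ℝ) / 4)) 2,
          ← Real.rpow_mul hs0]
        norm_num
      have ha : 0 < P / (2 * q) := by positivity
      have h1 := main_est φ x t t' (P / (2 * q)) ha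
      rw [hNval, ← hsdef] at h1
      have hP2 : φ.normSq = P ^ 2 := by
        rw [hPdef, H1.norm, Real.sq_sqrt hnormSq0]
      calc ‖W t' φ x - W t φ x‖
          ≤ (2 * π)⁻¹ * (P / (2 * q) / 2 * (∫ k : ℝ, (min 2 (k ^ 2 * s)) ^ 2 / (1 + k ^ 2))
            + (2 * (P / (2 * q)))⁻¹ * (2 * π * φ.normSq)) := h1
        _ ≤ (2 * π)⁻¹ * (P / (2 * q) / 2 * (8 * π * Real.sqrt s)
            + (2 * (P / (2 * q)))⁻¹ * (2 * π * φ.normSq)) := by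
            apply mul_le_mul_of_nonneg_left _ (by positivity)
            apply add_le_add_left
            exact mul_le_mul_of_nonneg_left hJ (by positivity)
        _ = 2 * q * P := by
            rw [hsqrt, hP2]
            field_simp
            ring
      

end SNLS
end
end

section
/- Hölder regularity of the trace at the origin: Assume U ∈ C²(ℂ;ℝ), U(ψ) = u(|ψ|²), and U_k := sup_{z∈ℂ}|∇^kU(z)| < ∞ for k = 0,1,2 with U₂ > 0, and set τ = 1/(4U₂²). Let φ ∈ H¹(ℝ) and let ψ ∈ C_b(ℝ×[0,τ];ℂ) be the unique solution of the Duhamel equation with data φ. Then t ↦ ψ(0,t) is Hölder continuous of exponent 1/4 on [0,τ]: there is C > 0 such that |ψ(0,t) − ψ(0,t')| ≤ C|t − t'|^{1/4} for all t, t' ∈ [0,τ]. -/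
/-!  Common framework for the Schrödinger equation coupled to a nonlinear
oscillator (point nonlinearity), following Komech–Komech.

The Sobolev space `H¹(ℝ)` is described through the Fourier side: an element
of `H¹(ℝ)` is (identified with) a measurable function `hat : ℝ → ℂ`
(its Fourier transform, nonunitary convention `φ̂(k) = ∫ e^{-ikx} φ(x) dx`)
such that `(1+k²)^{1/2} φ̂ ∈ L²(ℝ)`.  Since `φ̂ ∈ L¹`, the continuous
representative `φ(x) = (2π)⁻¹ ∫ e^{ikx} φ̂(k) dk` is defined pointwise, so
`φ(0)` makes sense.  Plancherel gives `‖φ‖²_{L²} = (2π)⁻¹∫|φ̂|²` and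
`‖φ'‖²_{L²} = (2π)⁻¹∫ k²|φ̂|²`. -/

noncomputable section

open MeasureTheory Real Set

namespace SNLS

namespace TraceHolder

open Complex intervalIntegral

/-! ### Elementary estimates on complex exponentials -/

private lemma norm_exp_I_ofReal (a : ℝ) : ‖Complex.exp (Complex.I * (a : ℂ))‖ = 1 := by
  rw [mul_comm]
  exact Complex.norm_exp_ofReal_mul_I a

private lemma exp_I_sub_le (a b : ℝ) :
    ‖Complex.exp (Complex.I * (a : ℂ)) - Complex.exp (Complex.I * (b : ℂ))‖ ≤
      2 * min 1 |a - b| := by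
  have key : Complex.exp (Complex.I * (a : ℂ)) - Complex.exp (Complex.I * (b : ℂ)) =
      Complex.exp (Complex.I * (b : ℂ)) *
        (Complex.exp (Complex.I * ((a - b : ℝ) : ℂ)) - 1) := by
    rw [mul_sub, mul_one, ← Complex.exp_add]
    push_cast
    ring_nf
  rw [key, norm_mul, norm_exp_I_ofReal, one_mul]
  rcases le_total |a - b| 1 with h | h
  · rw [min_eq_right h]
    have h2 : ‖Complex.I * ((a - b : ℝ) : ℂ)‖ ≤ 1 := by
      rwa [norm_mul, Complex.norm_I, one_mul, Complex.norm_real, Real.norm_eq_abs]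
    have := Complex.norm_exp_sub_one_le h2
    rw [norm_mul, Complex.norm_I, one_mul, Complex.norm_real, Real.norm_eq_abs] at this
    exact this
  · rw [min_eq_left h]
    calc ‖Complex.exp (Complex.I * ((a - b : ℝ) : ℂ)) - 1‖
        ≤ ‖Complex.exp (Complex.I * ((a - b : ℝ) : ℂ))‖ + ‖(1 : ℂ)‖ := norm_sub_le _ _
      _ = 2 := by rw [norm_exp_I_ofReal, norm_one]; norm_num
      _ = 2 * 1 := by ring

/-! ### The free kernel at the origin -/

private lemma freeKernel_zero (s : ℝ) :
    freeKernel s 0 = ((2 * π * s : ℝ) : ℂ) ^ (-(1 / 2 : ℂ)) := by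
  simp [freeKernel]

private lemma freeKernel_eq {s : ℝ} (hs : 0 ≤ s) :
    freeKernel s 0 = (((2 * π * s) ^ (-(1 : ℝ)/2) : ℝ) : ℂ) := by
  rw [freeKernel_zero, Complex.ofReal_cpow (by positivity)]
  norm_num

private lemma norm_freeKernel {s : ℝ} (hs : 0 ≤ s) :
    ‖freeKernel s 0‖ = (2 * π * s) ^ (-(1 : ℝ)/2) := by
  rw [freeKernel_eq hs, Complex.norm_real, Real.norm_eq_abs,
    _root_.abs_of_nonneg (Real.rpow_nonneg (by positivity) _)]

/-! ### Integrability of the Fourier transform of an `H¹` function -/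

private lemma hat_integrable (φ : H1) : Integrable φ.hat := by
  refine Integrable.mono'
    (g := fun k : ℝ => (1 / 2) * ((1 + k ^ 2)⁻¹ + (1 + k ^ 2) * ‖φ.hat k‖ ^ 2))
    ((integrable_inv_one_add_sq.add φ.finite).const_mul _) φ.meas ?_
  filter_upwards with k
  have hc : (0 : ℝ) < 1 + k ^ 2 := by positivity
  set n := ‖φ.hat k‖ with hn
  have hident : (1 + k ^ 2)⁻¹ + (1 + k ^ 2) * n ^ 2 - 2 * n =
      (1 + k ^ 2)⁻¹ * (1 - (1 + k ^ 2) * n) ^ 2 := by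
    field_simp
    ring
  have h2 : 0 ≤ (1 + k ^ 2)⁻¹ * (1 - (1 + k ^ 2) * n) ^ 2 := by positivity
  linarith

/-! ### Interval integrability helpers for the kernel -/

private lemma II_kernel (c a b : ℝ) :
    IntervalIntegrable (fun s : ℝ => (c - s) ^ (-(1 : ℝ)/2)) volume a b := by
  have h := (intervalIntegral.intervalIntegrable_rpow' (a := c - a) (b := c - b)
      (by norm_num : (-1 : ℝ) < -(1 : ℝ)/2)).comp_sub_left c
  simpa using h

private lemma integral_kernel (c a b : ℝ) :
    ∫ s in a..b, (c - s) ^ (-(1 : ℝ)/2) =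
      2 * (c - a) ^ ((1 : ℝ)/2) - 2 * (c - b) ^ ((1 : ℝ)/2) := by
  have h := intervalIntegral.integral_comp_sub_left (a := a) (b := b)
    (fun u : ℝ => u ^ (-(1 : ℝ)/2)) c
  rw [h, integral_rpow (Or.inl (by norm_num))]
  norm_num
  ring

/-! ### The free-evolution part is Hölder-1/4 at the origin -/

private lemma free_diff_le (φ : H1) (t t' : ℝ) :
    ‖W t φ 0 - W t' φ 0‖ ≤
      (2 * π)⁻¹ * (2 * π + ∫ k : ℝ, (1 + k ^ 2) * ‖φ.hat k‖ ^ 2) *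
        |t - t'| ^ ((1 : ℝ)/4) := by
  rcases eq_or_ne t t' with rfl | hne
  · simp [Real.zero_rpow (by norm_num : ((1:ℝ)/4) ≠ 0)]
  set Δ := |t - t'| with hΔdef
  have hΔ : 0 < Δ := abs_pos.mpr (sub_ne_zero.mpr hne)
  set Iφ := ∫ k : ℝ, (1 + k ^ 2) * ‖φ.hat k‖ ^ 2 with hIφ
  have hIφ0 : 0 ≤ Iφ := integral_nonneg fun k => by positivity
  have hint : ∀ r : ℝ, Integrable (fun k : ℝ =>
      Complex.exp (Complex.I * ((k * 0 + k ^ 2 * r : ℝ) : ℂ)) * φ.hat k) := by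
    intro r
    refine (hat_integrable φ).bdd_mul ?_ (Filter.Eventually.of_forall fun k => le_of_eq (norm_exp_I_ofReal _))
    exact (Complex.continuous_exp.comp (by continuity)).aestronglyMeasurable
  have hW : W t φ 0 - W t' φ 0 = (((2 * π)⁻¹ : ℝ) : ℂ) *
      ∫ k : ℝ, (Complex.exp (Complex.I * ((k * 0 + k ^ 2 * t : ℝ) : ℂ)) -
        Complex.exp (Complex.I * ((k * 0 + k ^ 2 * t' : ℝ) : ℂ))) * φ.hat k := by
    rw [W, W, ← mul_sub, ← integral_sub (hint t) (hint t')]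
    congr 1
    apply MeasureTheory.integral_congr_ae
    filter_upwards with k
    ring
  -- the dominating function
  set G : ℝ → ℝ := fun k =>
    Δ ^ (-(1 : ℝ)/4) * (2 * Δ) * (1 + Δ * k ^ 2)⁻¹ +
      Δ ^ ((1 : ℝ)/4) * ((1 + k ^ 2) * ‖φ.hat k‖ ^ 2) with hGdef
  have hsq : Real.sqrt Δ ≠ 0 := by
    simpa [Real.sqrt_ne_zero'] using hΔ
  have hint1 : Integrable (fun k : ℝ => (1 + Δ * k ^ 2)⁻¹) := by
    have h := integrable_inv_one_add_sq.comp_mul_left' (R := Real.sqrt Δ) hsq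
    simpa [mul_pow, Real.sq_sqrt hΔ.le] using h
  have hG : Integrable G :=
    (hint1.const_mul _).add (φ.finite.const_mul _)
  have hpt : ∀ k : ℝ,
      ‖(Complex.exp (Complex.I * ((k * 0 + k ^ 2 * t : ℝ) : ℂ)) -
        Complex.exp (Complex.I * ((k * 0 + k ^ 2 * t' : ℝ) : ℂ))) * φ.hat k‖ ≤ G k := by
    intro k
    rw [norm_mul]
    have h1 : ‖Complex.exp (Complex.I * ((k * 0 + k ^ 2 * t : ℝ) : ℂ)) -
        Complex.exp (Complex.I * ((k * 0 + k ^ 2 * t' : ℝ) : ℂ))‖ ≤ 2 * min 1 (Δ * k ^ 2) := by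
      have h := exp_I_sub_le (k * 0 + k ^ 2 * t) (k * 0 + k ^ 2 * t')
      have harg : |(k * 0 + k ^ 2 * t) - (k * 0 + k ^ 2 * t')| = Δ * k ^ 2 := by
        rw [show (k * 0 + k ^ 2 * t) - (k * 0 + k ^ 2 * t') = (t - t') * k ^ 2 by ring,
          abs_mul, _root_.abs_of_nonneg (sq_nonneg k)]
      rwa [harg] at h
    set m := min 1 (Δ * k ^ 2) with hm
    set n := ‖φ.hat k‖ with hn
    have hm0 : 0 ≤ m := le_min (by norm_num) (by positivity)
    have hm1 : m ≤ 1 := min_le_left _ _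
    have hm2 : m ≤ Δ * k ^ 2 := min_le_right _ _
    have hc : (0 : ℝ) < 1 + k ^ 2 := by positivity
    have hd : (0 : ℝ) < 1 + Δ * k ^ 2 := by positivity
    have hε : 0 < Δ ^ ((1 : ℝ)/4) := Real.rpow_pos_of_pos hΔ _
    have hneg : Δ ^ (-(1 : ℝ)/4) = (Δ ^ ((1 : ℝ)/4))⁻¹ := by
      rw [show (-(1 : ℝ)/4) = -((1 : ℝ)/4) by norm_num, Real.rpow_neg hΔ.le]
    have step1 : 2 * m * n ≤
        Δ ^ (-(1 : ℝ)/4) * (m ^ 2 / (1 + k ^ 2)) + Δ ^ ((1 : ℝ)/4) * ((1 + k ^ 2) * n ^ 2) := by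
      have hident : Δ ^ (-(1 : ℝ)/4) * (m ^ 2 / (1 + k ^ 2)) +
          Δ ^ ((1 : ℝ)/4) * ((1 + k ^ 2) * n ^ 2) - 2 * m * n =
          (Δ ^ ((1 : ℝ)/4) * (1 + k ^ 2))⁻¹ * (m - Δ ^ ((1 : ℝ)/4) * (1 + k ^ 2) * n) ^ 2 := by
        rw [hneg]
        field_simp
        ring
      have hnn : 0 ≤ (Δ ^ ((1 : ℝ)/4) * (1 + k ^ 2))⁻¹ *
          (m - Δ ^ ((1 : ℝ)/4) * (1 + k ^ 2) * n) ^ 2 := by positivity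
      linarith
    have step2 : m ^ 2 / (1 + k ^ 2) ≤ 2 * Δ / (1 + Δ * k ^ 2) := by
      rw [div_le_div_iff₀ hc hd]
      have hΔk : 0 ≤ Δ * k ^ 2 := mul_nonneg hΔ.le (sq_nonneg k)
      have e1 : m ^ 2 ≤ m := by nlinarith
      have e2 : m ^ 2 * (Δ * k ^ 2) ≤ Δ * k ^ 2 := by nlinarith
      nlinarith [hΔ.le, hΔk]
    have hmono : Δ ^ (-(1 : ℝ)/4) * (m ^ 2 / (1 + k ^ 2)) ≤
        Δ ^ (-(1 : ℝ)/4) * (2 * Δ / (1 + Δ * k ^ 2)) :=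
      mul_le_mul_of_nonneg_left step2 (Real.rpow_nonneg hΔ.le _)
    have hGk : G k = Δ ^ (-(1 : ℝ)/4) * (2 * Δ / (1 + Δ * k ^ 2)) +
        Δ ^ ((1 : ℝ)/4) * ((1 + k ^ 2) * n ^ 2) := by
      rw [hGdef]
      simp only [div_eq_mul_inv]
      ring
    have hfirst : ‖Complex.exp (Complex.I * ((k * 0 + k ^ 2 * t : ℝ) : ℂ)) -
        Complex.exp (Complex.I * ((k * 0 + k ^ 2 * t' : ℝ) : ℂ))‖ * n ≤ 2 * m * n :=
      mul_le_mul_of_nonneg_right h1 (norm_nonneg _)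
    rw [hGk]
    linarith
  have hbound : ‖∫ k : ℝ, (Complex.exp (Complex.I * ((k * 0 + k ^ 2 * t : ℝ) : ℂ)) -
      Complex.exp (Complex.I * ((k * 0 + k ^ 2 * t' : ℝ) : ℂ))) * φ.hat k‖ ≤ ∫ k : ℝ, G k :=
    norm_integral_le_of_norm_le hG (Filter.Eventually.of_forall hpt)
  have hval : (∫ k : ℝ, G k) = 2 * π * Δ ^ ((1 : ℝ)/4) + Δ ^ ((1 : ℝ)/4) * Iφ := by
    rw [hGdef]
    rw [MeasureTheory.integral_add (hint1.const_mul _) (φ.finite.const_mul _),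
      MeasureTheory.integral_const_mul, MeasureTheory.integral_const_mul]
    have hcomp : (fun k : ℝ => (1 + Δ * k ^ 2)⁻¹) =
        fun k : ℝ => (1 + (Real.sqrt Δ * k) ^ 2)⁻¹ := by
      funext k
      rw [mul_pow, Real.sq_sqrt hΔ.le]
    rw [hcomp, MeasureTheory.Measure.integral_comp_mul_left (fun u : ℝ => (1 + u ^ 2)⁻¹) (Real.sqrt Δ),
      integral_univ_inv_one_add_sq, smul_eq_mul,
      _root_.abs_of_nonneg (inv_nonneg.mpr (Real.sqrt_nonneg Δ))]
    have hsqrt : Real.sqrt Δ = Δ ^ ((1 : ℝ)/2) := Real.sqrt_eq_rpow Δ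
    have e3 : Δ ^ (-(1 : ℝ)/4) * Δ ^ (-((1 : ℝ)/2)) = Δ ^ (-(3 : ℝ)/4) := by
      rw [← Real.rpow_add hΔ]; norm_num
    have e4 : Δ ^ (-(3 : ℝ)/4) * Δ = Δ ^ ((1 : ℝ)/4) := by
      rw [← Real.rpow_add_one hΔ.ne']; norm_num
    have harith : Δ ^ (-(1 : ℝ)/4) * (2 * Δ) * ((Real.sqrt Δ)⁻¹ * π) =
        2 * π * Δ ^ ((1 : ℝ)/4) := by
      rw [hsqrt, ← Real.rpow_neg hΔ.le]
      calc Δ ^ (-(1 : ℝ)/4) * (2 * Δ) * (Δ ^ (-((1 : ℝ)/2)) * π)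
          = 2 * π * (Δ ^ (-(1 : ℝ)/4) * Δ ^ (-((1 : ℝ)/2)) * Δ) := by ring
        _ = 2 * π * Δ ^ ((1 : ℝ)/4) := by rw [e3, e4]
    rw [harith]
  rw [hW, norm_mul]
  have hco : ‖(((2 * π)⁻¹ : ℝ) : ℂ)‖ = (2 * π)⁻¹ := by
    rw [Complex.norm_real, Real.norm_eq_abs, _root_.abs_of_pos (by positivity)]
  rw [hco]
  calc (2 * π)⁻¹ * ‖∫ k : ℝ, (Complex.exp (Complex.I * ((k * 0 + k ^ 2 * t : ℝ) : ℂ)) -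
        Complex.exp (Complex.I * ((k * 0 + k ^ 2 * t' : ℝ) : ℂ))) * φ.hat k‖
      ≤ (2 * π)⁻¹ * (2 * π * Δ ^ ((1 : ℝ)/4) + Δ ^ ((1 : ℝ)/4) * Iφ) := by
        refine mul_le_mul_of_nonneg_left ?_ (by positivity)
        rw [← hval]
        exact hbound
    _ = (2 * π)⁻¹ * (2 * π + Iφ) * Δ ^ ((1 : ℝ)/4) := by ring

/-! ### The Duhamel part is Hölder-1/2 at the origin -/

private lemma norm_kernel_mul_le {c s U₁ : ℝ} {z : ℂ} (hcs : 0 ≤ c - s)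
    (hFb : ‖z‖ ≤ U₁) :
    ‖freeKernel (c - s) 0 * z‖ ≤ U₁ * (c - s) ^ (-(1 : ℝ)/2) := by
  have hU₁ : 0 ≤ U₁ := le_trans (norm_nonneg _) hFb
  rw [norm_mul]
  have h1 : ‖freeKernel (c - s) 0‖ ≤ (c - s) ^ (-(1 : ℝ)/2) := by
    rw [norm_freeKernel hcs]
    rcases eq_or_lt_of_le hcs with heq | hlt
    · rw [← heq]
      norm_num
    · exact Real.rpow_le_rpow_of_nonpos (by positivity)
        (by nlinarith [Real.pi_gt_three]) (by norm_num)
  calc ‖freeKernel (c - s) 0‖ * ‖z‖ ≤ (c - s) ^ (-(1 : ℝ)/2) * U₁ :=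
        mul_le_mul h1 hFb (norm_nonneg _) (by positivity)
    _ = U₁ * (c - s) ^ (-(1 : ℝ)/2) := mul_comm _ _

private lemma duhamel_diff_le {F : ℂ → ℂ} {θ : ℝ → ℂ} {U₁ τ : ℝ}
    (hcont : ContinuousOn (fun s => F (θ s)) (Set.Icc 0 τ))
    (hb : ∀ s ∈ Set.Icc (0 : ℝ) τ, ‖F (θ s)‖ ≤ U₁)
    {t t' : ℝ} (ht : t ∈ Set.Icc (0 : ℝ) τ) (ht' : t' ∈ Set.Icc (0 : ℝ) τ) (h : t' ≤ t) :
    ‖(∫ s in (0 : ℝ)..t, freeKernel s 0 * F (θ (t - s))) -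
      ∫ s in (0 : ℝ)..t', freeKernel s 0 * F (θ (t' - s))‖ ≤
      4 * U₁ * (t - t') ^ ((1 : ℝ)/2) := by
  obtain ⟨h0t, htτ⟩ := ht
  obtain ⟨h0t', ht'τ⟩ := ht'
  have hτ : (0 : ℝ) ≤ τ := le_trans h0t htτ
  have hU₁ : 0 ≤ U₁ := le_trans (norm_nonneg _) (hb 0 ⟨le_rfl, hτ⟩)
  -- change of variables s ↦ r - s
  have e : ∀ r : ℝ, (∫ s in (0 : ℝ)..r, freeKernel s 0 * F (θ (r - s))) =
      ∫ s in (0 : ℝ)..r, freeKernel (r - s) 0 * F (θ s) := by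
    intro r
    have h := intervalIntegral.integral_comp_sub_left (a := 0) (b := r)
      (fun x => freeKernel (r - x) 0 * F (θ x)) r
    simp only [sub_sub_cancel, sub_self, sub_zero] at h
    exact h
  rw [e t, e t']
  -- measurability of the kernels
  have hkerAE : ∀ c b : ℝ, b ≤ c →
      AEStronglyMeasurable (fun s => freeKernel (c - s) 0)
        (volume.restrict (Set.Ioc (0 : ℝ) b)) := by
    intro c b hbc
    have hm : Measurable (fun s : ℝ => (((2 * π * (c - s)) ^ (-(1 : ℝ)/2) : ℝ) : ℂ)) := by
      apply Complex.measurable_ofReal.comp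
      exact (by fun_prop : Measurable fun x : ℝ => x ^ (-(1:ℝ)/2)).comp
        ((measurable_const.sub measurable_id).const_mul (2 * π))
    refine hm.aestronglyMeasurable.congr ?_
    filter_upwards [ae_restrict_mem measurableSet_Ioc] with s hs
    exact (freeKernel_eq (by linarith [hs.2] : (0 : ℝ) ≤ c - s)).symm
  have hθAE : ∀ b : ℝ, b ≤ τ →
      AEStronglyMeasurable (fun s => F (θ s)) (volume.restrict (Set.Ioc (0 : ℝ) b)) := by
    intro b hbτ
    exact (hcont.mono fun s hs => ⟨hs.1.le, hs.2.trans hbτ⟩).aestronglyMeasurable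
      measurableSet_Ioc
  -- interval integrability
  have hII : ∀ c b : ℝ, 0 ≤ b → b ≤ c → b ≤ τ →
      IntervalIntegrable (fun s => freeKernel (c - s) 0 * F (θ s)) volume 0 b := by
    intro c b hb0 hbc hbτ
    have hbnd : IntervalIntegrable (fun s => U₁ * (c - s) ^ (-(1 : ℝ)/2)) volume 0 b :=
      (II_kernel c 0 b).const_mul U₁
    refine hbnd.mono_fun ?_ ?_
    · rw [Set.uIoc_of_le hb0]
      exact ((hkerAE c b hbc)).mul (hθAE b hbτ)
    · rw [Set.uIoc_of_le hb0]
      filter_upwards [ae_restrict_mem measurableSet_Ioc] with s hs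
      have hcs : (0 : ℝ) ≤ c - s := by linarith [hs.2]
      rw [Real.norm_eq_abs,
        _root_.abs_of_nonneg (by positivity : (0 : ℝ) ≤ U₁ * (c - s) ^ (-(1 : ℝ)/2))]
      exact norm_kernel_mul_le hcs (hb s ⟨hs.1.le, hs.2.trans hbτ⟩)
  have hg1 : IntervalIntegrable (fun s => freeKernel (t - s) 0 * F (θ s)) volume 0 t' :=
    hII t t' h0t' h ht'τ
  have hgt : IntervalIntegrable (fun s => freeKernel (t - s) 0 * F (θ s)) volume 0 t :=
    hII t t h0t le_rfl htτ
  have hg2 : IntervalIntegrable (fun s => freeKernel (t - s) 0 * F (θ s)) volume t' t :=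
    hgt.mono_set (Set.uIcc_subset_uIcc
      (by rw [Set.uIcc_of_le h0t]; exact ⟨h0t', h.trans le_rfl⟩)
      (by rw [Set.uIcc_of_le h0t]; exact ⟨h0t, le_rfl⟩))
  have hg' : IntervalIntegrable (fun s => freeKernel (t' - s) 0 * F (θ s)) volume 0 t' :=
    hII t' t' h0t' le_rfl ht'τ
  have hsplit : (∫ s in (0 : ℝ)..t, freeKernel (t - s) 0 * F (θ s)) =
      (∫ s in (0 : ℝ)..t', freeKernel (t - s) 0 * F (θ s)) +
        ∫ s in t'..t, freeKernel (t - s) 0 * F (θ s) :=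
    (intervalIntegral.integral_add_adjacent_intervals hg1 hg2).symm
  rw [hsplit, show ∀ A B C : ℂ, A + B - C = (A - C) + B by intros; ring,
    ← intervalIntegral.integral_sub hg1 hg']
  -- piece 2 : the short interval
  have hb2 : ‖∫ s in t'..t, freeKernel (t - s) 0 * F (θ s)‖ ≤
      2 * U₁ * (t - t') ^ ((1 : ℝ)/2) := by
    have hbound := intervalIntegral.norm_integral_le_abs_of_norm_le
      (f := fun s => freeKernel (t - s) 0 * F (θ s))
      (g := fun s => U₁ * (t - s) ^ (-(1 : ℝ)/2)) (a := t') (b := t) (μ := volume)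
      ?_ ((II_kernel t t' t).const_mul U₁)
    · refine hbound.trans ?_
      rw [intervalIntegral.integral_const_mul, integral_kernel]
      have hr : ∀ x : ℝ, x ^ ((1:ℝ)/2) = Real.sqrt x := fun x => (Real.sqrt_eq_rpow x).symm
      simp only [hr, sub_self, Real.sqrt_zero, mul_zero, sub_zero]
      rw [_root_.abs_of_nonneg (mul_nonneg hU₁ (by positivity))]
      nlinarith [Real.sqrt_nonneg (t - t'), hU₁]
    · rw [Set.uIoc_of_le h]
      filter_upwards [ae_restrict_mem measurableSet_Ioc] with s hs
      have hcs : (0 : ℝ) ≤ t - s := by linarith [hs.2]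
      exact norm_kernel_mul_le hcs (hb s ⟨le_trans h0t' hs.1.le, hs.2.trans htτ⟩)
  -- piece 1 : the long interval
  have hb1 : ‖∫ s in (0 : ℝ)..t',
      (freeKernel (t - s) 0 * F (θ s) - freeKernel (t' - s) 0 * F (θ s))‖ ≤
      2 * U₁ * (t - t') ^ ((1 : ℝ)/2) := by
    have hbound := intervalIntegral.norm_integral_le_abs_of_norm_le
      (f := fun s => freeKernel (t - s) 0 * F (θ s) - freeKernel (t' - s) 0 * F (θ s))
      (g := fun s => U₁ * ((t' - s) ^ (-(1 : ℝ)/2) - (t - s) ^ (-(1 : ℝ)/2)))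
      (a := 0) (b := t') (μ := volume)
      ?_ (((II_kernel t' 0 t').sub (II_kernel t 0 t')).const_mul U₁)
    · refine hbound.trans ?_
      rw [intervalIntegral.integral_const_mul,
        intervalIntegral.integral_sub (II_kernel t' 0 t') (II_kernel t 0 t'),
        integral_kernel, integral_kernel]
      have hr : ∀ x : ℝ, x ^ ((1:ℝ)/2) = Real.sqrt x := fun x => (Real.sqrt_eq_rpow x).symm
      simp only [hr, sub_zero, sub_self, Real.sqrt_zero, mul_zero]
      have hsub : Real.sqrt t ≤ Real.sqrt t' + Real.sqrt (t - t') := by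
        have h1 : t ≤ (Real.sqrt t' + Real.sqrt (t - t')) ^ 2 := by
          nlinarith [Real.sq_sqrt h0t', Real.sq_sqrt (show (0:ℝ) ≤ t - t' by linarith),
            mul_nonneg (Real.sqrt_nonneg t') (Real.sqrt_nonneg (t - t'))]
        calc Real.sqrt t ≤ Real.sqrt ((Real.sqrt t' + Real.sqrt (t - t')) ^ 2) :=
              Real.sqrt_le_sqrt h1
          _ = Real.sqrt t' + Real.sqrt (t - t') := Real.sqrt_sq (by positivity)
      have hmono2 : Real.sqrt t' ≤ Real.sqrt t := Real.sqrt_le_sqrt h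
      apply abs_le.mpr
      constructor <;>
      nlinarith [mul_nonneg hU₁ (sub_nonneg.mpr hmono2),
        mul_nonneg hU₁ (show (0:ℝ) ≤ Real.sqrt t' + Real.sqrt (t - t') - Real.sqrt t by
          linarith),
        mul_nonneg hU₁ (Real.sqrt_nonneg (t - t')), hU₁]
    · -- pointwise bound a.e. on Ι 0 t'
      rw [Set.uIoc_of_le h0t']
      have hne : ∀ᵐ s ∂(volume.restrict (Set.Ioc (0:ℝ) t')), s ≠ t' :=
        ae_restrict_of_ae (ae_iff.mpr (by simp [not_not]))
      filter_upwards [ae_restrict_mem measurableSet_Ioc, hne] with s hs hsne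
      have hs1 : 0 < t' - s := lt_of_le_of_ne (by linarith [hs.2]) (by
        intro hh
        exact hsne (by linarith))
      have hs2 : 0 < t - s := by linarith
      rw [← sub_mul, norm_mul]
      have hker : ‖freeKernel (t - s) 0 - freeKernel (t' - s) 0‖ ≤
          (t' - s) ^ (-(1 : ℝ)/2) - (t - s) ^ (-(1 : ℝ)/2) := by
        rw [freeKernel_eq hs2.le, freeKernel_eq hs1.le, ← Complex.ofReal_sub,
          Complex.norm_real, Real.norm_eq_abs]
        have hmono : (2 * π * (t - s)) ^ (-(1 : ℝ)/2) ≤ (2 * π * (t' - s)) ^ (-(1 : ℝ)/2) :=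
          Real.rpow_le_rpow_of_nonpos (by positivity)
            (by nlinarith [Real.pi_gt_three]) (by norm_num)
        rw [abs_sub_comm, _root_.abs_of_nonneg (by linarith)]
        have hfac : ∀ x : ℝ, 0 < x →
            (2 * π * x) ^ (-(1 : ℝ)/2) = (2 * π) ^ (-(1 : ℝ)/2) * x ^ (-(1 : ℝ)/2) := by
          intro x hx
          exact Real.mul_rpow (by positivity) hx.le
        rw [hfac _ hs1, hfac _ hs2, ← mul_sub]
        have hle1 : (2 * π) ^ (-(1 : ℝ)/2) ≤ 1 :=
          Real.rpow_le_one_of_one_le_of_nonpos (by nlinarith [Real.pi_gt_three]) (by norm_num)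
        have hd : 0 ≤ (t' - s) ^ (-(1 : ℝ)/2) - (t - s) ^ (-(1 : ℝ)/2) := by
          have := Real.rpow_le_rpow_of_nonpos hs1 (by linarith : t' - s ≤ t - s)
            (by norm_num : (-(1:ℝ)/2) ≤ 0)
          linarith
        nlinarith [Real.rpow_nonneg (le_of_lt hs1) (-(1:ℝ)/2),
          Real.rpow_nonneg (le_of_lt hs2) (-(1:ℝ)/2)]
      have hF : ‖F (θ s)‖ ≤ U₁ := hb s ⟨hs.1.le, hs.2.trans ht'τ⟩
      calc ‖freeKernel (t - s) 0 - freeKernel (t' - s) 0‖ * ‖F (θ s)‖ ≤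
            ((t' - s) ^ (-(1 : ℝ)/2) - (t - s) ^ (-(1 : ℝ)/2)) * U₁ := by
            refine mul_le_mul hker hF (norm_nonneg _) ?_
            have := Real.rpow_le_rpow_of_nonpos hs1 (by linarith : t' - s ≤ t - s)
              (by norm_num : (-(1:ℝ)/2) ≤ 0)
            linarith
        _ = U₁ * ((t' - s) ^ (-(1 : ℝ)/2) - (t - s) ^ (-(1 : ℝ)/2)) := mul_comm _ _
  calc ‖(∫ s in (0:ℝ)..t', (freeKernel (t - s) 0 * F (θ s) - freeKernel (t' - s) 0 * F (θ s))) +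
        ∫ s in t'..t, freeKernel (t - s) 0 * F (θ s)‖ ≤
        ‖∫ s in (0:ℝ)..t', (freeKernel (t - s) 0 * F (θ s) - freeKernel (t' - s) 0 * F (θ s))‖ +
        ‖∫ s in t'..t, freeKernel (t - s) 0 * F (θ s)‖ := norm_add_le _ _
    _ ≤ 2 * U₁ * (t - t') ^ ((1 : ℝ)/2) + 2 * U₁ * (t - t') ^ ((1 : ℝ)/2) := add_le_add hb1 hb2
    _ = 4 * U₁ * (t - t') ^ ((1 : ℝ)/2) := by ring

end TraceHolder

set_option maxHeartbeats 1000000 in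
/-- **Hölder regularity of the trace at the origin.**
With `τ = 1/(4U₂²)`, let `ψ ∈ C_b(ℝ×[0,τ];ℂ)` be the unique solution of the
Duhamel equation with data `φ ∈ H¹(ℝ)`.  Then `t ↦ ψ(0,t)` is Hölder continuous
of exponent `1/4` on `[0,τ]`. -/
theorem trace_holder
    (U : ℂ → ℝ) (u : ℝ → ℝ) (U₀ U₁ U₂ : ℝ)
    (hU : ContDiff ℝ 2 U)
    (hUinv : ∀ z : ℂ, U z = u (‖z‖ ^ 2))
    (hU0 : ∀ z : ℂ, |U z| ≤ U₀)
    (hU1 : ∀ z : ℂ, ‖grad U z‖ ≤ U₁)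
    (hU2 : ∀ z : ℂ, ‖fderiv ℝ (grad U) z‖ ≤ U₂)
    (hU2pos : 0 < U₂)
    (φ : H1) (ψ : ℝ → ℝ → ℂ)
    (hcb : CbOn ψ (Set.Icc 0 (1 / (4 * U₂ ^ 2))))
    (hsol : IsDuhamelSolution (nonlin U) φ ψ (Set.Icc 0 (1 / (4 * U₂ ^ 2)))) :
    ∃ C > (0 : ℝ), ∀ t ∈ Set.Icc (0 : ℝ) (1 / (4 * U₂ ^ 2)),
      ∀ t' ∈ Set.Icc (0 : ℝ) (1 / (4 * U₂ ^ 2)),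
        ‖ψ 0 t - ψ 0 t'‖ ≤ C * |t - t'| ^ ((1 : ℝ) / 4) := by
  classical
  set τ : ℝ := 1 / (4 * U₂ ^ 2) with hτdef
  have hτpos : 0 < τ := by positivity
  set Iφ := ∫ k : ℝ, (1 + k ^ 2) * ‖φ.hat k‖ ^ 2 with hIφ
  have hIφ0 : 0 ≤ Iφ := MeasureTheory.integral_nonneg fun k => by positivity
  have hU₁0 : 0 ≤ U₁ := le_trans (norm_nonneg _) (hU1 0)
  have hθ : ContinuousOn (fun s : ℝ => ψ 0 s) (Set.Icc 0 τ) := by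
    have hmap : Set.MapsTo (fun s : ℝ => ((0 : ℝ), s)) (Set.Icc 0 τ)
        (Set.univ ×ˢ Set.Icc 0 τ) := fun s hs => ⟨Set.mem_univ _, hs⟩
    exact hcb.1.comp (Continuous.continuousOn (by continuity)) hmap
  have hFcont : Continuous (nonlin U) := by
    have hf : Continuous (fderiv ℝ U) := hU.continuous_fderiv (by norm_num)
    have h1 : Continuous fun z => ((fderiv ℝ U z 1 : ℝ) : ℂ) := by fun_prop
    have h2 : Continuous fun z => ((fderiv ℝ U z Complex.I : ℝ) : ℂ) := by fun_prop
    have : Continuous fun z => grad U z := by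
      unfold grad
      exact h1.add (h2.mul continuous_const)
    exact this.neg
  have hFθcont : ContinuousOn (fun s => nonlin U (ψ 0 s)) (Set.Icc 0 τ) :=
    hFcont.comp_continuousOn hθ
  have hFb : ∀ s ∈ Set.Icc (0 : ℝ) τ, ‖nonlin U (ψ 0 s)‖ ≤ U₁ := by
    intro s _
    rw [show nonlin U (ψ 0 s) = -grad U (ψ 0 s) from rfl, norm_neg]
    exact hU1 _
  set C : ℝ := (2 * π)⁻¹ * (2 * π + Iφ) + 4 * U₁ * τ ^ ((1 : ℝ)/4) + 1 with hC
  have hC1 : 0 ≤ (2 * π)⁻¹ * (2 * π + Iφ) :=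
    mul_nonneg (by positivity) (by nlinarith [Real.pi_pos])
  have hC2 : 0 ≤ 4 * U₁ * τ ^ ((1 : ℝ)/4) :=
    mul_nonneg (by linarith) (Real.rpow_nonneg hτpos.le _)
  have hCpos : 0 < C := by rw [hC]; linarith
  refine ⟨C, hCpos, ?_⟩
  have key : ∀ t ∈ Set.Icc (0 : ℝ) τ, ∀ t' ∈ Set.Icc (0 : ℝ) τ, t' ≤ t →
      ‖ψ 0 t - ψ 0 t'‖ ≤ C * |t - t'| ^ ((1 : ℝ)/4) := by
    intro t ht t' ht' hle
    rcases eq_or_lt_of_le hle with heq | hlt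
    · subst heq
      simp [Real.zero_rpow (show ((1 : ℝ)/4) ≠ 0 by norm_num)]
    have hD := hsol 0 t ht
    have hD' := hsol 0 t' ht'
    have hrepr : ψ 0 t - ψ 0 t' = (W t φ 0 - W t' φ 0) -
        ((∫ s in (0 : ℝ)..t, freeKernel s 0 * nonlin U (ψ 0 (t - s))) -
          ∫ s in (0 : ℝ)..t', freeKernel s 0 * nonlin U (ψ 0 (t' - s))) := by
      rw [hD, hD']
      ring
    rw [hrepr]
    have hfree := TraceHolder.free_diff_le φ t t'
    have hduh := TraceHolder.duhamel_diff_le hFθcont hFb ht ht' hle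
    have hδ' : 0 < t - t' := by linarith
    have habs : |t - t'| = t - t' := _root_.abs_of_pos hδ'
    calc ‖(W t φ 0 - W t' φ 0) -
        ((∫ s in (0 : ℝ)..t, freeKernel s 0 * nonlin U (ψ 0 (t - s))) -
          ∫ s in (0 : ℝ)..t', freeKernel s 0 * nonlin U (ψ 0 (t' - s)))‖ ≤
        ‖W t φ 0 - W t' φ 0‖ +
        ‖(∫ s in (0 : ℝ)..t, freeKernel s 0 * nonlin U (ψ 0 (t - s))) -
          ∫ s in (0 : ℝ)..t', freeKernel s 0 * nonlin U (ψ 0 (t' - s))‖ := norm_sub_le _ _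
      _ ≤ (2 * π)⁻¹ * (2 * π + Iφ) * |t - t'| ^ ((1 : ℝ)/4) +
          4 * U₁ * (t - t') ^ ((1 : ℝ)/2) := add_le_add hfree hduh
      _ ≤ C * |t - t'| ^ ((1 : ℝ)/4) := by
          rw [habs]
          have hrp : 0 ≤ (t - t') ^ ((1 : ℝ)/4) := Real.rpow_nonneg hδ'.le _
          have hsplit2 : (t - t') ^ ((1 : ℝ)/2) =
              (t - t') ^ ((1 : ℝ)/4) * (t - t') ^ ((1 : ℝ)/4) := by
            rw [← Real.rpow_add hδ']
            norm_num
          have hmono : (t - t') ^ ((1 : ℝ)/4) ≤ τ ^ ((1 : ℝ)/4) :=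
            Real.rpow_le_rpow hδ'.le (by linarith [ht.2, ht'.1]) (by norm_num)
          have h4 : 4 * U₁ * (t - t') ^ ((1 : ℝ)/2) ≤
              4 * U₁ * τ ^ ((1 : ℝ)/4) * (t - t') ^ ((1 : ℝ)/4) := by
            rw [hsplit2]
            have hmm := mul_le_mul_of_nonneg_left (mul_le_mul_of_nonneg_right hmono hrp)
              (show (0 : ℝ) ≤ 4 * U₁ by linarith)
            nlinarith [hmm]
          have hCge : (2 * π)⁻¹ * (2 * π + Iφ) + 4 * U₁ * τ ^ ((1 : ℝ)/4) ≤ C := by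
            rw [hC]
            linarith
          nlinarith [h4, mul_le_mul_of_nonneg_right hCge hrp]
  intro t ht t' ht'
  rcases le_total t' t with hle | hle
  · exact key t ht t' ht' hle
  · rw [norm_sub_rev, abs_sub_comm]
    exact key t' ht' t ht hle

end SNLS
end
end
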